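/- arXiv:1607.06962 — 11 statements merged into one kernel-verified Lean document; each statement's English description precedes it below -/
import Mathlib

section
/- Let f and g be q-polynomials over F_{q^n} (which are exactly the F_q-linear maps of F_{q^n}). If D_f = D_g (equivalently, the linear sets L_f and L_g of PG(1,q^n) coincide), then for every positive integer d, the sum over all nonzero x in F_{q^n} of (f(x)/x)^d equals the sum over all nonzero x in F_{q^n} of (g(x)/x)^d. -/
/-!
For an additive map `f` of a field `F` of characteristic `p` and `y ∈ D_f`, the elements
`x ≠ 0` with `f x / x = y` are the nonzero elements of the additive subgroup
`ker (f - y · id)`. A nonzero element of it has additive order `p`, so `p` divides the order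
of the subgroup and the fibre has `-1` elements modulo `p`. Hence
`∑_{x ≠ 0} (f x / x)^d = -∑_{y ∈ D_f} y^d` depends only on the set `D_f`.
-/

open Finset

theorem natCast_card_addSubgroup_eq_zero {R : Type*} [Ring R] (p : ℕ) [Fact p.Prime] [CharP R p]
    (H : AddSubgroup R) {x : R} (hx : x ∈ H) (hx0 : x ≠ 0) : (Nat.card H : R) = 0 :=
  (CharP.cast_eq_zero_iff R p _).mpr <|
    addOrderOf_eq_prime (p := p) (by simp [nsmul_eq_mul]) hx0 ▸ H.addOrderOf_dvd_natCard hx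

def qPolynomialAddHom {R : Type*} [CommRing R] (p : ℕ) [ExpChar R p] (e n : ℕ) (a : ℕ → R) :
    R →+ R :=
  AddMonoidHom.mk' (fun x ↦ ∑ i ∈ range n, a i * x ^ (p ^ e) ^ i) fun x y ↦ by
    simp only [← pow_mul, add_pow_expChar_pow, mul_add, sum_add_distrib]

section Field

variable {F : Type*} [Field F] [Fintype F] [DecidableEq F]

theorem natCast_card_fiber_div_self_eq_neg_one (p : ℕ) [Fact p.Prime] [CharP F p] (f : F →+ F)
    {y : F} (hy : y ∈ image (fun x ↦ f x / x) {x | x ≠ 0}) :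
    (#{x | x ≠ 0 ∧ f x / x = y} : F) = -1 := by
  set H := (f - AddMonoidHom.mulLeft y).ker
  have hmem : ∀ x, x ∈ H ↔ f x = y * x := fun x ↦ by
    simp [H, AddMonoidHom.mem_ker, sub_eq_zero]
  have hfiber : ({x | x ≠ 0 ∧ f x / x = y} : Finset F) = ({x | x ∈ H} : Finset F).erase 0 := by
    ext x
    simp +contextual [hmem, div_eq_iff]
  have hcard : #{x | x ∈ H} = Nat.card H := by
    rw [Nat.card_eq_fintype_card, Fintype.card_subtype]
  obtain ⟨x, hx0, rfl⟩ : ∃ x, x ≠ 0 ∧ f x / x = y := by simpa using hy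
  have hxH : x ∈ H := (hmem x).mpr (div_mul_cancel₀ _ hx0).symm
  have h0H : (0 : F) ∈ ({x | x ∈ H} : Finset F) := by simp
  rw [hfiber, card_erase_of_mem h0H, Nat.cast_sub (card_pos.mpr ⟨0, h0H⟩), hcard,
    natCast_card_addSubgroup_eq_zero p H hxH hx0, Nat.cast_one, zero_sub]

theorem sum_comp_div_self_eq_neg_sum_image (p : ℕ) [Fact p.Prime] [CharP F p] (f : F →+ F)
    (h : F → F) :
    ∑ x ∈ {x | x ≠ 0}, h (f x / x) = -∑ y ∈ image (fun x ↦ f x / x) {x | x ≠ 0}, h y := by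
  rw [sum_comp, ← sum_neg_distrib]
  refine sum_congr rfl fun y hy ↦ ?_
  rw [filter_filter, nsmul_eq_mul, natCast_card_fiber_div_self_eq_neg_one p f hy, neg_one_mul]

end Field

theorem stmt_0_general (p e n q : ℕ) (hp : p.Prime) (hq : q = p ^ e)
    (F : Type) [Field F] [Fintype F] [DecidableEq F] (hF : Fintype.card F = q ^ n)
    (a b : ℕ → F) (f g : F → F)
    (hf : ∀ x : F, f x = ∑ i ∈ Finset.range n, a i * x ^ q ^ i)
    (hg : ∀ x : F, g x = ∑ i ∈ Finset.range n, b i * x ^ q ^ i)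
    (hD : {y : F | ∃ x : F, x ≠ 0 ∧ f x / x = y} = {y : F | ∃ x : F, x ≠ 0 ∧ g x / x = y})
    (d : ℕ) :
    ∑ x ∈ Finset.univ.filter (fun x : F => x ≠ 0), (f x / x) ^ d
      = ∑ x ∈ Finset.univ.filter (fun x : F => x ≠ 0), (g x / x) ^ d := by
  have := Fact.mk hp
  have : CharP F p := charP_of_card_eq_prime_pow (hF.trans (by rw [hq, ← pow_mul]))
  obtain rfl : f = qPolynomialAddHom p e n a := funext fun x ↦ by rw [hf, hq]; rfl
  obtain rfl : g = qPolynomialAddHom p e n b := funext fun x ↦ by rw [hg, hq]; rfl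
  have himage : image (fun x ↦ qPolynomialAddHom p e n a x / x) {x | x ≠ 0} =
      image (fun x ↦ qPolynomialAddHom p e n b x / x) {x | x ≠ 0} := by
    ext y
    simpa using Set.ext_iff.mp hD y
  rw [sum_comp_div_self_eq_neg_sum_image p _ (· ^ d),
    sum_comp_div_self_eq_neg_sum_image p _ (· ^ d), himage]

/-- If the linear sets `L_f` and `L_g` (equivalently, the sets `D_f = D_g`
of quotients `f(x)/x`) coincide, then for every positive integer `d` the power sums of
`f(x)/x` and `g(x)/x` over the nonzero elements agree. -/
theorem stmt_0 (p e n q : ℕ) (hp : p.Prime) (he : 0 < e) (hn : 0 < n) (hq : q = p ^ e)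
    (F : Type) [Field F] [Fintype F] [DecidableEq F] (hF : Fintype.card F = q ^ n)
    (a b : ℕ → F) (f g : F → F)
    (hf : ∀ x : F, f x = ∑ i ∈ Finset.range n, a i * x ^ q ^ i)
    (hg : ∀ x : F, g x = ∑ i ∈ Finset.range n, b i * x ^ q ^ i)
    (hD : {y : F | ∃ x : F, x ≠ 0 ∧ f x / x = y} = {y : F | ∃ x : F, x ≠ 0 ∧ g x / x = y})
    (d : ℕ) (hd : 0 < d) :
    ∑ x ∈ Finset.univ.filter (fun x : F => x ≠ 0), (f x / x) ^ d
      = ∑ x ∈ Finset.univ.filter (fun x : F => x ≠ 0), (g x / x) ^ d :=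
  stmt_0_general p e n q hp hq F hF a b f g hf hg hD d
end

section
/- Let f(x) = Σ_{i=0}^{n-1} a_i x^{q^i} and g(x) = Σ_{i=0}^{n-1} b_i x^{q^i} be q-polynomials over F_{q^n} with D_f = D_g. Then: (1) a_0 = b_0; (2) for every k with 1 ≤ k ≤ n-1, a_k · a_{n-k}^{q^k} = b_k · b_{n-k}^{q^k}; and (3) for every k with 2 ≤ k ≤ n-1, a_1 · a_{k-1}^{q} · a_{n-k}^{q^k} + a_k · a_{n-1}^{q} · a_{n-k+1}^{q^k} = b_1 · b_{k-1}^{q} · b_{n-k}^{q^k} + b_k · b_{n-1}^{q} · b_{n-k+1}^{q^k}. -/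
/-!
Every value `y` of `x ↦ f x / x` on `Fˣ` is attained on `ker (f - y •) \ {0}`, whose size is
`-1` in `F` because a nontrivial additive subgroup of `F` has order divisible by the
characteristic. Hence `∑_{x ≠ 0} φ (f x / x) = -∑_{y ∈ D_f} φ y` for every `φ`, and `D_f = D_g`
forces the power sums `∑_{x ≠ 0} (f x / x) ^ m` of `f` and `g` to agree. For
`m = ∑ₛ q ^ kₛ` the Frobenius expands `(f x / x) ^ m` into monomials
`(∏ₛ a_{ιₛ} ^ q ^ kₛ) x ^ (∑ₛ (q ^ ιₛ - 1) q ^ kₛ)`, and summing over `Fˣ` keeps (with sign `-1`)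
exactly those whose exponent is divisible by `q ^ n - 1`. For `m = 1`, `1 + q ^ k` and
`1 + q + q ^ k` these are determined by comparing sums of at most three powers of `q` modulo
`q ^ n - 1`, and the resulting identities are (1), (2) and, after cancelling the terms already
controlled by (1) and (2), (3).
-/

open Finset

namespace Nat

theorem pow_modEq_pow_mod {q : ℕ} (hq : q ≠ 0) (m n : ℕ) :
    q ^ m ≡ q ^ (m % n) [MOD q ^ n - 1] := by
  have h : q ^ n ≡ 1 [MOD q ^ n - 1] := Nat.modEq_sub (Nat.one_le_pow _ _ (Nat.pos_of_ne_zero hq))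
  calc q ^ m = (q ^ n) ^ (m / n) * q ^ (m % n) := by rw [← pow_mul, ← pow_add, Nat.div_add_mod]
    _ ≡ 1 ^ (m / n) * q ^ (m % n) [MOD q ^ n - 1] := (h.pow _).mul_right _
    _ = q ^ (m % n) := by rw [one_pow, one_mul]

theorem dvd_sum_pow_sub_one_mul_iff {q n r : ℕ} (hq : q ≠ 0) (ι k : Fin r → ℕ) :
    q ^ n - 1 ∣ ∑ s, (q ^ ι s - 1) * q ^ k s ↔
      ∑ s, q ^ ((ι s + k s) % n) ≡ ∑ s, q ^ k s [MOD q ^ n - 1] := by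
  have hsum : ∑ s, (q ^ ι s - 1) * q ^ k s + ∑ s, q ^ k s = ∑ s, q ^ (ι s + k s) := by
    rw [← Finset.sum_add_distrib]
    refine Finset.sum_congr rfl fun s _ => ?_
    rw [pow_add, Nat.sub_one_mul, Nat.sub_add_cancel
      (Nat.le_mul_of_pos_left _ (Nat.pos_of_ne_zero (pow_ne_zero _ hq)))]
  have hred : ∑ s, q ^ (ι s + k s) ≡ ∑ s, q ^ ((ι s + k s) % n) [MOD q ^ n - 1] :=
    Nat.ModEq.sum fun s _ => pow_modEq_pow_mod hq _ _
  rw [← Nat.modEq_zero_iff_dvd]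
  constructor
  · intro h
    have h' := h.add_right (∑ s, q ^ k s)
    rw [hsum, zero_add] at h'
    exact hred.symm.trans h'
  · intro h
    exact Nat.ModEq.add_right_cancel' (∑ s, q ^ k s) (by rw [hsum, zero_add]; exact hred.trans h)

theorem not_dvd_one_of_two_le {q : ℕ} (hq : 2 ≤ q) : ¬ q ∣ 1 := fun h => by
  have := Nat.le_of_dvd one_pos h; omega

theorem pow_add_pow_eq_one_add_pow {q A B k : ℕ} (hq : 2 ≤ q) (hk : k ≠ 0)
    (h : q ^ A + q ^ B = 1 + q ^ k) : A = 0 ∧ B = k ∨ A = k ∧ B = 0 := by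
  have hinj := Nat.pow_right_injective hq
  rcases eq_or_ne A 0 with rfl | hA
  · exact Or.inl ⟨rfl, hinj (by simpa using h)⟩
  rcases eq_or_ne B 0 with rfl | hB
  · rw [pow_zero, add_comm] at h
    exact Or.inr ⟨hinj (Nat.add_left_cancel h), rfl⟩
  refine absurd ((Nat.dvd_add_left (dvd_pow_self q hk)).mp ?_) (not_dvd_one_of_two_le hq)
  exact h ▸ dvd_add (dvd_pow_self q hA) (dvd_pow_self q hB)

theorem one_add_pow_ne_self_add_pow {q C k : ℕ} (hq : 2 ≤ q) (hk : k ≠ 0) :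
    1 + q ^ C ≠ q + q ^ k := by
  intro h
  rcases eq_or_ne C 0 with rfl | hC
  · have := Nat.one_le_pow k q (by omega)
    rw [pow_zero] at h
    omega
  refine not_dvd_one_of_two_le hq ((Nat.dvd_add_left (dvd_pow_self q hC)).mp ?_)
  exact h ▸ dvd_add (dvd_refl q) (dvd_pow_self q hk)

theorem pow_add_pow_eq_self_add_pow {q B C k : ℕ} (hq : 2 ≤ q) (hk : 2 ≤ k)
    (h : q ^ B + q ^ C = q + q ^ k) : B = 1 ∧ C = k ∨ B = k ∧ C = 1 := by
  have hk0 : k ≠ 0 := by omega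
  obtain ⟨B, rfl⟩ : ∃ B', B = B' + 1 := Nat.exists_eq_add_one.mpr <| Nat.pos_of_ne_zero
    fun hB => one_add_pow_ne_self_add_pow hq hk0 (by rwa [hB, pow_zero] at h)
  obtain ⟨C, rfl⟩ : ∃ C', C = C' + 1 := Nat.exists_eq_add_one.mpr <| Nat.pos_of_ne_zero
    fun hC => one_add_pow_ne_self_add_pow hq hk0 (by rwa [hC, pow_zero, add_comm] at h)
  obtain ⟨k, rfl⟩ : ∃ k', k = k' + 1 := Nat.exists_eq_add_one.mpr (by omega)
  have h' : q ^ B + q ^ C = 1 + q ^ k := by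
    apply Nat.eq_of_mul_eq_mul_right (by omega : 0 < q)
    simpa only [add_mul, one_mul, ← pow_succ] using h
  rcases pow_add_pow_eq_one_add_pow hq (by omega) h' with ⟨rfl, rfl⟩ | ⟨rfl, rfl⟩ <;> simp

theorem pow_add_pow_add_pow_eq_one_add_self_add_pow {q A B C k : ℕ} (hq : 2 ≤ q) (hk : 2 ≤ k)
    (h : q ^ A + q ^ B + q ^ C = 1 + q + q ^ k) :
    A = 0 ∧ (B = 1 ∧ C = k ∨ B = k ∧ C = 1) ∨ B = 0 ∧ (A = 1 ∧ C = k ∨ A = k ∧ C = 1) ∨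
      C = 0 ∧ (A = 1 ∧ B = k ∨ A = k ∧ B = 1) := by
  rcases eq_or_ne A 0 with rfl | hA
  · exact Or.inl ⟨rfl, pow_add_pow_eq_self_add_pow hq hk (by rw [pow_zero] at h; omega)⟩
  rcases eq_or_ne B 0 with rfl | hB
  · exact Or.inr <| Or.inl ⟨rfl, pow_add_pow_eq_self_add_pow hq hk (by rw [pow_zero] at h; omega)⟩
  rcases eq_or_ne C 0 with rfl | hC
  · exact Or.inr <| Or.inr ⟨rfl, pow_add_pow_eq_self_add_pow hq hk (by rw [pow_zero] at h; omega)⟩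
  rw [add_assoc 1] at h
  have hdvd : q ∣ q + q ^ k := dvd_add (dvd_refl q) (dvd_pow_self q (show k ≠ 0 by omega))
  refine absurd ((Nat.dvd_add_left hdvd).mp ?_) (not_dvd_one_of_two_le hq)
  rw [← h]
  exact dvd_add (dvd_add (dvd_pow_self q hA) (dvd_pow_self q hB)) (dvd_pow_self q hC)

theorem ModEq.eq_of_lt_add {m a b : ℕ} (h : a ≡ b [MOD m]) (ha : a < b + m) (hb : b < a + m) :
    a = b :=
  h.eq_of_abs_lt (by rw [abs_lt]; constructor <;> omega)

theorem two_mul_pow_pred_le {q n : ℕ} (hq : 2 ≤ q) (hn : n ≠ 0) : 2 * q ^ (n - 1) ≤ q ^ n := by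
  calc 2 * q ^ (n - 1) ≤ q * q ^ (n - 1) := Nat.mul_le_mul_right _ hq
    _ = q ^ n := mul_pow_sub_one hn q

theorem pow_add_pow_modEq_one_add_pow_iff {q n A B k : ℕ} (hq : 2 ≤ q) (hA : A < n) (hB : B < n)
    (hk : k ≠ 0) (hkn : k < n) :
    q ^ A + q ^ B ≡ 1 + q ^ k [MOD q ^ n - 1] ↔ A = 0 ∧ B = k ∨ A = k ∧ B = 0 := by
  refine ⟨fun h => ?_, ?_⟩
  · have hle : ∀ X < n, q ^ X ≤ q ^ (n - 1) :=
      fun X hX => Nat.pow_le_pow_right (by omega) (by omega)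
    have hpos : ∀ X, 1 ≤ q ^ X := fun X => Nat.one_le_pow _ _ (by omega)
    have := two_mul_pow_pred_le hq (show n ≠ 0 by omega)
    have := hle A hA; have := hle B hB; have := hle k hkn
    have := hpos A; have := hpos B; have := hpos k; have := hpos (n - 1)
    exact pow_add_pow_eq_one_add_pow hq hk (h.eq_of_lt_add (by omega) (by omega))
  · rintro (⟨rfl, rfl⟩ | ⟨rfl, rfl⟩) <;> exact congrArg (· % (q ^ n - 1)) (by ring)

theorem pow_add_pow_add_pow_ne_pow_add_self_add_pow {q n A B C k : ℕ} (hq : 2 ≤ q)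
    (hA : A < n) (hB : B < n) (hC : C < n) (hk : 2 ≤ k) (hkn : k < n) :
    q ^ A + q ^ B + q ^ C ≠ q ^ n + q + q ^ k := by
  have hle : ∀ X < n, q ^ X ≤ q ^ (n - 1) := fun X hX => Nat.pow_le_pow_right (by omega) (by omega)
  have hle' : ∀ X < n, X ≠ n - 1 → q ^ X ≤ q ^ (n - 1 - 1) :=
    fun X hX hX' => Nat.pow_le_pow_right (by omega) (by omega)
  have h1 := two_mul_pow_pred_le hq (show n ≠ 0 by omega)
  have h2 := two_mul_pow_pred_le hq (show n - 1 ≠ 0 by omega)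
  -- Two exponents must equal `n - 1`; the third term would then be
  -- `(q - 2) q ^ (n - 1) + q + q ^ k`, too large for `q ≥ 3` and `≡ 2 [MOD 4]` for `q = 2`.
  have htop : ∀ X < n, 2 * q ^ (n - 1) + q ^ X ≠ q ^ n + q + q ^ k := by
    intro X hX h
    have hX := hle X hX
    rcases (show q = 2 ∨ 3 ≤ q by omega) with rfl | hq3
    · have h4k : 4 ∣ 2 ^ k := pow_dvd_pow 2 hk
      have h4X : 2 ^ X = 1 ∨ 2 ^ X = 2 ∨ 4 ∣ 2 ^ X := by
        rcases (show X = 0 ∨ X = 1 ∨ 2 ≤ X by omega) with rfl | rfl | h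
        exacts [Or.inl rfl, Or.inr (Or.inl rfl), Or.inr (Or.inr (pow_dvd_pow 2 h))]
      rw [mul_pow_sub_one (by omega) 2] at h
      have hk0 : 0 < 2 ^ k := by positivity
      generalize 2 ^ X = t at h h4X
      generalize 2 ^ k = u at h h4k hk0
      omega
    · have : 3 * q ^ (n - 1) ≤ q ^ n := by
        calc 3 * q ^ (n - 1) ≤ q * q ^ (n - 1) := Nat.mul_le_mul_right _ hq3
          _ = q ^ n := mul_pow_sub_one (by omega) q
      omega
  intro h
  have := hle A hA; have := hle B hB; have := hle C hC
  by_cases hA' : A = n - 1 <;> by_cases hB' : B = n - 1 <;> by_cases hC' : C = n - 1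
  · exact htop C hC (by rw [← h, hA', hB']; ring)
  · exact htop C hC (by rw [← h, hA', hB']; ring)
  · exact htop B hB (by rw [← h, hA', hC']; ring)
  · have := hle' B hB hB'; have := hle' C hC hC'; omega
  · exact htop A hA (by rw [← h, hB', hC']; ring)
  · have := hle' A hA hA'; have := hle' C hC hC'; omega
  · have := hle' A hA hA'; have := hle' B hB hB'; omega
  · have := hle' A hA hA'; have := hle' B hB hB'; omega

theorem pow_add_pow_add_pow_modEq_one_add_self_add_pow_iff {q n A B C k : ℕ} (hq : 2 ≤ q)
    (hA : A < n) (hB : B < n) (hC : C < n) (hk : 2 ≤ k) (hkn : k < n) :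
    q ^ A + q ^ B + q ^ C ≡ 1 + q + q ^ k [MOD q ^ n - 1] ↔
      A = 0 ∧ (B = 1 ∧ C = k ∨ B = k ∧ C = 1) ∨ B = 0 ∧ (A = 1 ∧ C = k ∨ A = k ∧ C = 1) ∨
        C = 0 ∧ (A = 1 ∧ B = k ∨ A = k ∧ B = 1) := by
  refine ⟨fun h => pow_add_pow_add_pow_eq_one_add_self_add_pow hq hk ?_, ?_⟩
  · have hle : ∀ X < n, q ^ X ≤ q ^ (n - 1) :=
      fun X hX => Nat.pow_le_pow_right (by omega) (by omega)
    have hpos : ∀ X, 1 ≤ q ^ X := fun X => Nat.one_le_pow _ _ (by omega)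
    have := two_mul_pow_pred_le hq (show n ≠ 0 by omega)
    have := hle A hA; have := hle B hB; have := hle C hC; have := hle k hkn
    have : q ≤ q ^ (n - 1) := by simpa using hle 1 (by omega)
    have := hpos A; have := hpos B; have := hpos C; have := hpos k
    by_cases hS : q ^ A + q ^ B + q ^ C < q ^ n + q + q ^ k
    · exact h.eq_of_lt_add (by omega) (by omega)
    · -- both sides lie in `[3, 3 q ^ (n - 1)]`, so otherwise they differ by exactly `q ^ n - 1`
      have h' := ((Nat.modEq_sub_modulus_iff (by omega)).mpr h.symm).eq_of_lt_add
        (by omega) (by omega)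
      exact absurd (by omega) (pow_add_pow_add_pow_ne_pow_add_self_add_pow hq hA hB hC hk hkn)
  · rintro (⟨rfl, ⟨rfl, rfl⟩ | ⟨rfl, rfl⟩⟩ | ⟨rfl, ⟨rfl, rfl⟩ | ⟨rfl, rfl⟩⟩ |
      ⟨rfl, ⟨rfl, rfl⟩ | ⟨rfl, rfl⟩⟩) <;> exact congrArg (· % (q ^ n - 1)) (by ring)

theorem add_mod_eq_or {x y n : ℕ} (hx : x < n) (hy : y < n) :
    (x + y) % n = x + y ∧ x + y < n ∨ (x + y) % n + n = x + y := by
  rcases lt_or_ge (x + y) n with h | h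
  · exact Or.inl ⟨Nat.mod_eq_of_lt h, h⟩
  · right; rw [Nat.mod_eq_sub_mod h, Nat.mod_eq_of_lt (by omega)]; omega

end Nat

/-- The index tuples `ι` whose monomial `x ^ ∑ₛ (q ^ ιₛ - 1) * q ^ kₛ` survives summation over the
nonzero elements of a field with `q ^ n` elements. -/
def admissibleIndices (q n : ℕ) {r : ℕ} (k : Fin r → ℕ) : Finset (Fin r → ℕ) :=
  {ι ∈ Fintype.piFinset fun _ => range n | q ^ n - 1 ∣ ∑ s, (q ^ ι s - 1) * q ^ k s}

theorem mem_admissibleIndices {q n r : ℕ} (hq : q ≠ 0) {k ι : Fin r → ℕ} :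
    ι ∈ admissibleIndices q n k ↔
      (∀ s, ι s < n) ∧ ∑ s, q ^ ((ι s + k s) % n) ≡ ∑ s, q ^ k s [MOD q ^ n - 1] := by
  simp only [admissibleIndices, mem_filter, Fintype.mem_piFinset, mem_range,
    Nat.dvd_sum_pow_sub_one_mul_iff hq]

theorem admissibleIndices_zero {q n : ℕ} (hq : 2 ≤ q) (hn : n ≠ 0) :
    admissibleIndices q n ![0] = {![0]} := by
  ext ι
  simp only [admissibleIndices, mem_filter, Fintype.mem_piFinset, mem_range, mem_singleton,
    Fin.forall_fin_one, Fin.sum_univ_one, Matrix.cons_val_zero, pow_zero, mul_one, funext_iff]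
  constructor
  · rintro ⟨hι, hdvd⟩
    have := Nat.pow_lt_pow_right hq hι
    have := Nat.one_le_pow (ι 0) q (by omega)
    have : q ^ ι 0 - 1 = 0 := Nat.eq_zero_of_dvd_of_lt hdvd (by omega)
    by_contra h0
    have := Nat.one_lt_pow h0 (show 1 < q by omega)
    omega
  · intro h
    rw [h]
    simp only [pow_zero, tsub_self, dvd_zero, and_true]
    omega

theorem admissibleIndices_zero_pair {q n k : ℕ} (hq : 2 ≤ q) (hk : k ≠ 0) (hkn : k < n) :
    admissibleIndices q n ![0, k] = {![0, 0], ![k, n - k]} := by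
  ext ι
  simp only [mem_admissibleIndices (show q ≠ 0 by omega), Fin.forall_fin_two, Fin.sum_univ_two,
    Matrix.cons_val_zero, Matrix.cons_val_one, add_zero, pow_zero, mem_insert, mem_singleton,
    funext_iff]
  by_cases hι : ι 0 < n ∧ ι 1 < n
  · rw [Nat.mod_eq_of_lt hι.1,
      Nat.pow_add_pow_modEq_one_add_pow_iff hq hι.1 (Nat.mod_lt _ (by omega)) hk hkn]
    have := Nat.add_mod_eq_or hι.2 hkn
    omega
  · omega

theorem admissibleIndices_zero_one_triple {q n k : ℕ} (hq : 2 ≤ q) (hk : 2 ≤ k) (hkn : k < n) :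
    admissibleIndices q n ![0, 1, k] =
      {![0, 0, 0], ![0, k - 1, n - k + 1], ![1, n - 1, 0], ![k, n - 1, n - k + 1],
        ![1, k - 1, n - k], ![k, 0, n - k]} := by
  ext ι
  simp only [mem_admissibleIndices (show q ≠ 0 by omega), Fin.forall_fin_succ, Fin.sum_univ_three,
    Fin.succ_zero_eq_one, Fin.succ_one_eq_two, Matrix.cons_val, add_zero, pow_zero, pow_one,
    mem_insert, mem_singleton, funext_iff, IsEmpty.forall_iff, and_true]
  by_cases hι : ι 0 < n ∧ ι 1 < n ∧ ι 2 < n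
  · obtain ⟨h0, h1, h2⟩ := hι
    rw [Nat.mod_eq_of_lt h0, Nat.pow_add_pow_add_pow_modEq_one_add_self_add_pow_iff hq h0
      (Nat.mod_lt _ (by omega)) (Nat.mod_lt _ (by omega)) hk hkn]
    have hB := Nat.add_mod_eq_or h1 (show 1 < n by omega)
    have hC := Nat.add_mod_eq_or h2 hkn
    have hB0 : (ι 1 + 1) % n = 0 ↔ ι 1 = n - 1 := by omega
    have hB1 : (ι 1 + 1) % n = 1 ↔ ι 1 = 0 := by omega
    have hBk : (ι 1 + 1) % n = k ↔ ι 1 = k - 1 := by omega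
    have hC0 : (ι 2 + k) % n = 0 ↔ ι 2 = n - k := by omega
    have hC1 : (ι 2 + k) % n = 1 ↔ ι 2 = n - k + 1 := by omega
    have hCk : (ι 2 + k) % n = k ↔ ι 2 = 0 := by omega
    simp only [hB0, hB1, hBk, hC0, hC1, hCk, h0, h1, h2, true_and]
    generalize ι 0 = i, ι 1 = j, ι 2 = l at *
    constructor
    · rintro (⟨rfl, ⟨rfl, rfl⟩ | ⟨rfl, rfl⟩⟩ | ⟨rfl, ⟨rfl, rfl⟩ | ⟨rfl, rfl⟩⟩ |
        ⟨rfl, ⟨rfl, rfl⟩ | ⟨rfl, rfl⟩⟩) <;> simp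
    · rintro (⟨rfl, rfl, rfl⟩ | ⟨rfl, rfl, rfl⟩ | ⟨rfl, rfl, rfl⟩ | ⟨rfl, rfl, rfl⟩ |
        ⟨rfl, rfl, rfl⟩ | ⟨rfl, rfl, rfl⟩) <;> simp
  · exact ⟨fun h => absurd h.1 hι, fun h => absurd (by omega) hι⟩

theorem two_le_of_card_eq_pow {α : Type*} [Fintype α] [Nontrivial α] {q n : ℕ}
    (h : Fintype.card α = q ^ n) : 2 ≤ q := by
  by_contra! hq
  have := Fintype.one_lt_card (α := α)
  have : q ^ n ≤ 1 := pow_le_one₀ (Nat.zero_le q) (by omega)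
  omega

theorem ne_zero_of_card_eq_pow {α : Type*} [Fintype α] [Nontrivial α] {q n : ℕ}
    (h : Fintype.card α = q ^ n) : n ≠ 0 := by
  rintro rfl
  have := Fintype.one_lt_card (α := α)
  simp_all

section FiniteField

variable {F : Type*} [Field F] [Fintype F] [DecidableEq F]

theorem sum_pow_erase_zero (t : ℕ) :
    ∑ x ∈ univ.erase (0 : F), x ^ t = if Fintype.card F - 1 ∣ t then -1 else 0 := by
  rw [← FiniteField.sum_pow_units,
    Fintype.sum_equiv unitsEquivNeZero (fun u : Fˣ => (u : F) ^ t) (fun x => (x : F) ^ t)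
      fun _ => rfl]
  exact Finset.sum_subtype _ (fun x => by simp) _

theorem AddSubgroup.natCast_card_eq_zero_of_mem {R : Type*} [Ring R] [NoZeroDivisors R]
    {K : AddSubgroup R} {x : R} (hx : x ∈ K) (hx0 : x ≠ 0) : (Nat.card K : R) = 0 := by
  have h := congrArg Subtype.val (card_nsmul_eq_zero' (G := K) (x := ⟨x, hx⟩))
  simp only [AddSubgroup.coe_nsmul, AddSubgroup.coe_zero, nsmul_eq_mul] at h
  exact (mul_eq_zero.mp h).resolve_right hx0

theorem natCast_card_fiber_div_eq_neg_one (f : F →+ F) {x₀ : F} (hx₀ : x₀ ≠ 0) :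
    (#{x ∈ univ.erase 0 | f x / x = f x₀ / x₀} : F) = -1 := by
  set y := f x₀ / x₀
  let K := (f - AddMonoidHom.mulLeft y).ker
  have hmem : ∀ x, x ∈ K ↔ f x = y * x := fun x => by
    simp [K, AddMonoidHom.mem_ker, sub_eq_zero]
  have hfiber : {x ∈ univ.erase (0 : F) | f x / x = y} = (univ.filter (· ∈ K)).erase 0 := by
    ext x
    simp only [mem_filter, mem_erase, mem_univ, and_true, true_and, hmem]
    exact and_congr_right fun hx => div_eq_iff hx
  have hcard : #((univ : Finset F).filter (· ∈ K)) = Nat.card K := by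
    rw [Nat.card_eq_fintype_card, Fintype.card_subtype]
  have hK : (Nat.card K : F) = 0 :=
    AddSubgroup.natCast_card_eq_zero_of_mem ((hmem x₀).mpr (div_mul_cancel₀ _ hx₀).symm) hx₀
  rw [hfiber, card_erase_of_mem (by simp), hcard, Nat.cast_sub Nat.card_pos, hK]
  simp

theorem sum_comp_div_eq_neg_sum_image (f : F →+ F) (φ : F → F) :
    ∑ x ∈ univ.erase 0, φ (f x / x) = -∑ y ∈ (univ.erase 0).image fun x => f x / x, φ y := by
  rw [Finset.sum_comp, ← Finset.sum_neg_distrib]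
  refine Finset.sum_congr rfl fun y hy => ?_
  obtain ⟨x₀, hx₀, rfl⟩ := Finset.mem_image.mp hy
  rw [nsmul_eq_mul, natCast_card_fiber_div_eq_neg_one f (mem_erase.mp hx₀).1, neg_one_mul]

end FiniteField

section QPolynomial

variable {F : Type*} [Field F] {p e q n : ℕ} [ExpChar F p]

theorem sum_pow_pow_of_eq_pow (hq : q = p ^ e) {ι : Type*} (s : Finset ι) (g : ι → F) (k : ℕ) :
    (∑ i ∈ s, g i) ^ q ^ k = ∑ i ∈ s, g i ^ q ^ k := by
  subst hq
  rw [← pow_mul]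
  exact sum_pow_char_pow p _ s g

theorem sum_mul_pow_pow_add (hq : q = p ^ e) (a : ℕ → F) (x y : F) :
    ∑ i ∈ range n, a i * (x + y) ^ q ^ i =
      ∑ i ∈ range n, a i * x ^ q ^ i + ∑ i ∈ range n, a i * y ^ q ^ i := by
  subst hq
  rw [← sum_add_distrib]
  refine sum_congr rfl fun i _ => ?_
  rw [← pow_mul, add_pow_expChar_pow, mul_add]

variable [Fintype F] [DecidableEq F]

theorem sum_div_pow_sum_eq_neg_sum_admissibleIndices (hq : q = p ^ e)
    (hF : Fintype.card F = q ^ n) {a : ℕ → F} {f : F → F}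
    (hf : ∀ x, f x = ∑ i ∈ range n, a i * x ^ q ^ i) {r : ℕ} (k : Fin r → ℕ) :
    ∑ x ∈ univ.erase 0, (f x / x) ^ ∑ s, q ^ k s =
      -∑ ι ∈ admissibleIndices q n k, ∏ s, a (ι s) ^ q ^ k s := by
  have hq0 : q ≠ 0 := by have := two_le_of_card_eq_pow hF; omega
  have hterm : ∀ x ∈ univ.erase (0 : F), (f x / x) ^ ∑ s, q ^ k s =
      ∑ ι ∈ Fintype.piFinset fun _ => range n,
        (∏ s, a (ι s) ^ q ^ k s) * x ^ ∑ s, (q ^ ι s - 1) * q ^ k s := by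
    intro x hx
    have hx0 : x ≠ 0 := (mem_erase.mp hx).1
    have hdiv : f x / x = ∑ i ∈ range n, a i * x ^ (q ^ i - 1) := by
      rw [hf, sum_div]
      refine sum_congr rfl fun i _ => ?_
      rw [pow_sub₀ x hx0 (Nat.one_le_pow _ _ (Nat.pos_of_ne_zero hq0)), pow_one, mul_div_assoc,
        div_eq_mul_inv]
    rw [hdiv, ← prod_pow_eq_pow_sum]
    simp_rw [sum_pow_pow_of_eq_pow hq, mul_pow, ← pow_mul]
    rw [prod_univ_sum]
    refine sum_congr rfl fun ι _ => ?_
    rw [prod_mul_distrib, prod_pow_eq_pow_sum]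
  rw [sum_congr rfl hterm, sum_comm]
  simp_rw [← mul_sum, sum_pow_erase_zero, hF, admissibleIndices, sum_filter, ← sum_neg_distrib]
  refine sum_congr rfl fun ι _ => ?_
  split_ifs <;> simp

theorem sum_div_eq_neg (hq : q = p ^ e) (hF : Fintype.card F = q ^ n) {a : ℕ → F} {f : F → F}
    (hf : ∀ x, f x = ∑ i ∈ range n, a i * x ^ q ^ i) :
    ∑ x ∈ univ.erase 0, f x / x = -a 0 := by
  have := sum_div_pow_sum_eq_neg_sum_admissibleIndices hq hF hf ![0]
  rw [admissibleIndices_zero (two_le_of_card_eq_pow hF) (ne_zero_of_card_eq_pow hF)] at this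
  simpa using this

theorem sum_div_pow_one_add_pow (hq : q = p ^ e) (hF : Fintype.card F = q ^ n) {a : ℕ → F}
    {f : F → F} (hf : ∀ x, f x = ∑ i ∈ range n, a i * x ^ q ^ i) {k : ℕ} (hk : k ≠ 0)
    (hkn : k < n) :
    ∑ x ∈ univ.erase 0, (f x / x) ^ (1 + q ^ k) =
      -(a 0 * a 0 ^ q ^ k + a k * a (n - k) ^ q ^ k) := by
  have := sum_div_pow_sum_eq_neg_sum_admissibleIndices hq hF hf ![0, k]
  rw [admissibleIndices_zero_pair (two_le_of_card_eq_pow hF) hk hkn,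
    sum_pair fun h => hk (by simpa using congrFun h 0 : (0 : ℕ) = k).symm] at this
  simpa [Fin.sum_univ_two, Fin.prod_univ_two] using this

theorem sum_div_pow_one_add_self_add_pow (hq : q = p ^ e) (hF : Fintype.card F = q ^ n)
    {a : ℕ → F} {f : F → F} (hf : ∀ x, f x = ∑ i ∈ range n, a i * x ^ q ^ i) {k : ℕ}
    (hk : 2 ≤ k) (hkn : k < n) :
    ∑ x ∈ univ.erase 0, (f x / x) ^ (1 + q + q ^ k) =
      -(a 0 * a 0 ^ q * a 0 ^ q ^ k + a 0 * a (k - 1) ^ q * a (n - k + 1) ^ q ^ k +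
        a 1 * a (n - 1) ^ q * a 0 ^ q ^ k + a k * a (n - 1) ^ q * a (n - k + 1) ^ q ^ k +
        a 1 * a (k - 1) ^ q * a (n - k) ^ q ^ k + a k * a 0 ^ q * a (n - k) ^ q ^ k) := by
  have := sum_div_pow_sum_eq_neg_sum_admissibleIndices hq hF hf ![0, 1, k]
  rw [admissibleIndices_zero_one_triple (two_le_of_card_eq_pow hF) hk hkn] at this
  rw [sum_insert, sum_insert, sum_insert, sum_insert, sum_insert, sum_singleton] at this
  · simpa [Fin.sum_univ_three, Fin.prod_univ_three, add_assoc] using this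
  all_goals
    simp only [mem_insert, mem_singleton, funext_iff, Fin.forall_fin_succ, Fin.succ_zero_eq_one,
      Fin.succ_one_eq_two, Matrix.cons_val, IsEmpty.forall_iff, and_true]
    omega

end QPolynomial

theorem sum_comp_div_eq_of_setOf_eq {F : Type*} [Field F] [Fintype F] [DecidableEq F]
    {f g : F → F} (hf : ∀ x y, f (x + y) = f x + f y) (hg : ∀ x y, g (x + y) = g x + g y)
    (hD : {y | ∃ x, x ≠ 0 ∧ f x / x = y} = {y | ∃ x, x ≠ 0 ∧ g x / x = y}) (φ : F → F) :
    ∑ x ∈ univ.erase 0, φ (f x / x) = ∑ x ∈ univ.erase 0, φ (g x / x) := by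
  have himage : (univ.erase 0).image (fun x => f x / x) = (univ.erase 0).image (fun x => g x / x) :=
    coe_injective (by simpa [Set.ext_iff] using hD)
  have hf' := sum_comp_div_eq_neg_sum_image (AddMonoidHom.mk' f hf) φ
  have hg' := sum_comp_div_eq_neg_sum_image (AddMonoidHom.mk' g hg) φ
  simp only [AddMonoidHom.mk'_apply] at hf' hg'
  rw [hf', hg', himage]

theorem stmt_1_general (p e n q : ℕ) (hp : p.Prime) (hq : q = p ^ e)
    (F : Type) [Field F] [Fintype F] (hF : Fintype.card F = q ^ n)
    (a b : ℕ → F) (f g : F → F)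
    (hf : ∀ x : F, f x = ∑ i ∈ Finset.range n, a i * x ^ q ^ i)
    (hg : ∀ x : F, g x = ∑ i ∈ Finset.range n, b i * x ^ q ^ i)
    (hD : {y : F | ∃ x : F, x ≠ 0 ∧ f x / x = y} = {y : F | ∃ x : F, x ≠ 0 ∧ g x / x = y}) :
    a 0 = b 0 ∧
    (∀ k : ℕ, 1 ≤ k → k ≤ n - 1 →
      a k * (a (n - k)) ^ q ^ k = b k * (b (n - k)) ^ q ^ k) ∧
    (∀ k : ℕ, 2 ≤ k → k ≤ n - 1 →
      a 1 * (a (k - 1)) ^ q * (a (n - k)) ^ q ^ k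
          + a k * (a (n - 1)) ^ q * (a (n - k + 1)) ^ q ^ k
        = b 1 * (b (k - 1)) ^ q * (b (n - k)) ^ q ^ k
          + b k * (b (n - 1)) ^ q * (b (n - k + 1)) ^ q ^ k) := by
  classical
  have := Fact.mk hp
  have : CharP F p := charP_of_card_eq_prime_pow (hF.trans (by rw [hq, ← pow_mul]))
  have hadd : ∀ {c : ℕ → F} {h : F → F}, (∀ x, h x = ∑ i ∈ range n, c i * x ^ q ^ i) →
      ∀ x y, h (x + y) = h x + h y := fun hh x y => by simp only [hh, sum_mul_pow_pow_add hq]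
  have hpow : ∀ m, ∑ x ∈ univ.erase 0, (f x / x) ^ m = ∑ x ∈ univ.erase 0, (g x / x) ^ m :=
    fun m => sum_comp_div_eq_of_setOf_eq (hadd hf) (hadd hg) hD (· ^ m)
  have h0 : a 0 = b 0 := by
    simpa [sum_div_eq_neg hq hF hf, sum_div_eq_neg hq hF hg] using hpow 1
  have h1 : ∀ k, 1 ≤ k → k ≤ n - 1 → a k * a (n - k) ^ q ^ k = b k * b (n - k) ^ q ^ k := by
    intro k hk hkn
    have := hpow (1 + q ^ k)
    rw [sum_div_pow_one_add_pow hq hF hf (by omega) (by omega),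
      sum_div_pow_one_add_pow hq hF hg (by omega) (by omega), h0] at this
    simpa using this
  refine ⟨h0, h1, fun k hk hkn => ?_⟩
  have h1' : a 1 * a (n - 1) ^ q = b 1 * b (n - 1) ^ q := by
    simpa using h1 1 le_rfl (by omega)
  have hk1 : a (k - 1) ^ q * a (n - k + 1) ^ q ^ k = b (k - 1) ^ q * b (n - k + 1) ^ q ^ k := by
    have h := congrArg (· ^ q) (h1 (k - 1) (by omega) (by omega))
    rw [show n - (k - 1) = n - k + 1 by omega] at h
    simpa only [mul_pow, ← pow_mul, ← pow_succ, Nat.sub_add_cancel (by omega : 1 ≤ k)] using h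
  have := hpow (1 + q + q ^ k)
  rw [sum_div_pow_one_add_self_add_pow hq hF hf hk (by omega),
    sum_div_pow_one_add_self_add_pow hq hF hg hk (by omega), h0] at this
  linear_combination -this - b 0 * hk1 - b 0 ^ q ^ k * h1' - b 0 ^ q * h1 k (by omega) hkn

/-- relations among the coefficients of two q-polynomials defining the same
linear set of PG(1,q^n). -/
theorem stmt_1 (p e n q : ℕ) (hp : p.Prime) (he : 0 < e) (hn : 0 < n) (hq : q = p ^ e)
    (F : Type) [Field F] [Fintype F] (hF : Fintype.card F = q ^ n)
    (a b : ℕ → F) (f g : F → F)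
    (hf : ∀ x : F, f x = ∑ i ∈ Finset.range n, a i * x ^ q ^ i)
    (hg : ∀ x : F, g x = ∑ i ∈ Finset.range n, b i * x ^ q ^ i)
    (hD : {y : F | ∃ x : F, x ≠ 0 ∧ f x / x = y} = {y : F | ∃ x : F, x ≠ 0 ∧ g x / x = y}) :
    a 0 = b 0 ∧
    (∀ k : ℕ, 1 ≤ k → k ≤ n - 1 →
      a k * (a (n - k)) ^ q ^ k = b k * (b (n - k)) ^ q ^ k) ∧
    (∀ k : ℕ, 2 ≤ k → k ≤ n - 1 →
      a 1 * (a (k - 1)) ^ q * (a (n - k)) ^ q ^ k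
          + a k * (a (n - 1)) ^ q * (a (n - k + 1)) ^ q ^ k
        = b 1 * (b (k - 1)) ^ q * (b (n - k)) ^ q ^ k
          + b k * (b (n - 1)) ^ q * (b (n - k + 1)) ^ q ^ k) :=
  stmt_1_general p e n q hp hq F hF a b f g hf hg hD
end

section
/- Let n ≥ 2 and let a_0, a_1, ..., a_{n-1} ∈ F_{q^n} satisfy: a_0 = 1; a_k · a_{n-k}^{q^k} = 1 for every k with 1 ≤ k ≤ n-1; and a_1 · a_{k-1}^{q} · a_{n-k}^{q^k} + a_k · a_{n-1}^{q} · a_{n-k+1}^{q^k} = 2 for every k with 2 ≤ k ≤ n-1 (here 2 denotes 1+1 in F_{q^n}). Then a_i = a_1^{1+q+q^2+...+q^{i-1}} for every i with 1 ≤ i ≤ n-1, and N_{q^n/q}(a_1) = 1. -/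
/-!
Writing `x = a₁ a_{k-1}^q` and `y = a_k`, the relations with indices `k`, `k - 1` and `1`
turn the `k`-th quadratic relation into `x / y + y / x = 2`, i.e. `(x - y)² = 0`. Hence
`a_k = a₁ a_{k-1}^q`, which unrolls to `a_i = a₁^{1 + q + ⋯ + q^{i-1}}`; the relation
`a_{n-1} a₁^{q^{n-1}} = 1` is then exactly `N(a₁) = 1`.
-/

open Finset

theorem eq_of_mul_add_mul_eq_two {R : Type*} [CommRing R] [NoZeroDivisors R] {x y u v : R}
    (h : x * u + y * v = 2) (hu : y * u = 1) (hv : x * v = 1) : x = y := by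
  have hsq : (x - y) ^ 2 = 0 := by
    linear_combination x * y * h - x ^ 2 * hu - y ^ 2 * hv
  exact sub_eq_zero.mp (pow_eq_zero_iff two_ne_zero |>.mp hsq)

theorem eq_pow_geom_sum_of_succ_eq {M : Type*} [CommMonoid M] {a : ℕ → M} {q m : ℕ}
    (h : ∀ k, 1 ≤ k → k < m → a (k + 1) = a 1 * a k ^ q) :
    ∀ i, 1 ≤ i → i ≤ m → a i = a 1 ^ ∑ j ∈ range i, q ^ j := by
  intro i hi
  induction i, hi using Nat.le_induction with
  | base => simp
  | succ i hi ih =>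
    intro hi_succ
    rw [h i hi hi_succ, ih (by omega), ← pow_mul, ← pow_succ', geom_sum_succ, mul_comm]

section CoefficientRelations

variable {R : Type*} [CommRing R] [NoZeroDivisors R] {n q : ℕ} {a : ℕ → R}

theorem succ_eq_mul_pow_of_coeff_relations
    (h1 : ∀ k : ℕ, 1 ≤ k → k ≤ n - 1 → a k * (a (n - k)) ^ q ^ k = 1)
    (h2 : ∀ k : ℕ, 2 ≤ k → k ≤ n - 1 →
      a 1 * (a (k - 1)) ^ q * (a (n - k)) ^ q ^ k
        + a k * (a (n - 1)) ^ q * (a (n - k + 1)) ^ q ^ k = 2)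
    {k : ℕ} (hk : 1 ≤ k) (hkn : k < n - 1) : a (k + 1) = a 1 * a k ^ q := by
  have hquad := h2 (k + 1) (by omega) hkn
  have hrel_succ := h1 (k + 1) (by omega) hkn
  have hrel := h1 k hk (by omega)
  have hrel_one := h1 1 le_rfl (by omega)
  rw [Nat.add_sub_cancel, show n - (k + 1) + 1 = n - k by omega] at hquad
  rw [pow_one] at hrel_one
  have hk_pow : a k ^ q * a (n - k) ^ q ^ (k + 1) = 1 := by
    rw [pow_succ, pow_mul, ← mul_pow, hrel, one_pow]
  refine (eq_of_mul_add_mul_eq_two (u := a (n - (k + 1)) ^ q ^ (k + 1))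
    (v := a (n - 1) ^ q * a (n - k) ^ q ^ (k + 1)) ?_ hrel_succ ?_).symm
  · linear_combination hquad
  · linear_combination a 1 * a (n - 1) ^ q * hk_pow + hrel_one

end CoefficientRelations

theorem stmt_3_general (n q : ℕ) (hn : 2 ≤ n)
    (F : Type) [Field F]
    (a : ℕ → F)
    (h1 : ∀ k : ℕ, 1 ≤ k → k ≤ n - 1 → a k * (a (n - k)) ^ q ^ k = 1)
    (h2 : ∀ k : ℕ, 2 ≤ k → k ≤ n - 1 →
      a 1 * (a (k - 1)) ^ q * (a (n - k)) ^ q ^ k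
        + a k * (a (n - 1)) ^ q * (a (n - k + 1)) ^ q ^ k = 2) :
    (∀ i : ℕ, 1 ≤ i → i ≤ n - 1 → a i = a 1 ^ (∑ j ∈ Finset.range i, q ^ j)) ∧
      a 1 ^ (∑ j ∈ Finset.range n, q ^ j) = 1 := by
  have hpow := eq_pow_geom_sum_of_succ_eq fun k hk hkn ↦
    succ_eq_mul_pow_of_coeff_relations h1 h2 hk hkn
  refine ⟨hpow, ?_⟩
  have hnorm := h1 (n - 1) (by omega) le_rfl
  rw [show n - (n - 1) = 1 by omega, hpow (n - 1) (by omega) le_rfl, ← pow_add] at hnorm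
  rwa [show n = n - 1 + 1 by omega, sum_range_succ]

/-- from the coefficient relations one deduces
`a_i = a_1^{1+q+...+q^{i-1}}` for `1 ≤ i ≤ n-1` and `N_{q^n/q}(a_1) = 1`. -/
theorem stmt_3 (p e n q : ℕ) (hp : p.Prime) (he : 0 < e) (hn : 2 ≤ n) (hq : q = p ^ e)
    (F : Type) [Field F] [Fintype F] (hF : Fintype.card F = q ^ n)
    (a : ℕ → F) (ha0 : a 0 = 1)
    (h1 : ∀ k : ℕ, 1 ≤ k → k ≤ n - 1 → a k * (a (n - k)) ^ q ^ k = 1)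
    (h2 : ∀ k : ℕ, 2 ≤ k → k ≤ n - 1 →
      a 1 * (a (k - 1)) ^ q * (a (n - k)) ^ q ^ k
        + a k * (a (n - 1)) ^ q * (a (n - k + 1)) ^ q ^ k = 2) :
    (∀ i : ℕ, 1 ≤ i → i ≤ n - 1 → a i = a 1 ^ (∑ j ∈ Finset.range i, q ^ j)) ∧
      a 1 ^ (∑ j ∈ Finset.range n, q ^ j) = 1 :=
  stmt_3_general n q hn F a h1 h2
end

section
/- Let f(x) = Σ_{i=0}^{n-1} a_i x^{q^i} be a q-polynomial over F_{q^n} with adjoint f̂, let A, B, C, D ∈ F_{q^n} with AD − BC ≠ 0, and let σ be the field automorphism x ↦ x^{p^k} of F_{q^n}. Then the invertible σ-semilinear map (x,y) ↦ (Ax^σ + By^σ, Cx^σ + Dy^σ) of F_{q^n} × F_{q^n} maps U_f onto U_{f̂} if and only if the following n equations hold (indices taken modulo n): C + D·a_0^σ − a_0·A = Σ_{i=0}^{n-1} (B·a_i·a_i^σ)^{q^{n-i}}, and for every m with 1 ≤ m ≤ n−1: D·a_m^σ − (a_{n−m}·A)^{q^m} = Σ_{i=0}^{n-1} (B·a_i·a_{i+m}^σ)^{q^{n-i}}.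 -/
/-!
Since `x ↦ x ^ p ^ k` is a bijection of `F` and `f x ^ σ = f^σ (x ^ σ)`, where `f^σ` has
coefficients `a i ^ σ`, the image of `U_f` is the image of `U_{f^σ}` under the linear map
`(u, v) ↦ (A u + B v, C u + D v)`. This is `U_{f̂}` iff `C y + D f^σ(y) = f̂(A y + B f^σ(y))`
for all `y`: the identity makes the additive map `y ↦ A y + B f^σ(y)` injective, because
`AD - BC ≠ 0`, hence bijective. Both sides of the identity are `q`-polynomials, composed modulo
`y ^ q ^ n = y`, and a `q`-polynomial of `q`-degree `< n` is determined by its values because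
`q ^ (n - 1) < |F|`; comparing the coefficients of `y ^ q ^ m` gives the `n` equations.
-/

open Finset Matrix Polynomial

theorem Nat.forall_lt_iff_zero_and_forall_one_le {n : ℕ} (hn : 0 < n) {P : ℕ → Prop} :
    (∀ m < n, P m) ↔ P 0 ∧ ∀ m, 1 ≤ m → m ≤ n - 1 → P m :=
  ⟨fun h => ⟨h 0 hn, fun m _ hm => h m (by omega)⟩, fun ⟨h0, h⟩ m hm =>
    m.eq_zero_or_pos.elim (fun hm0 => hm0 ▸ h0) fun hm0 => h m hm0 (by omega)⟩

section Graph

variable {ι α β : Type*}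

theorem setOf_exists_eq_prodMk (g : α → β) :
    {w : α × β | ∃ x, w = (x, g x)} = Set.range fun x => (x, g x) :=
  Set.ext fun _ => exists_congr fun _ => eq_comm

theorem range_prodMk_eq_graph_iff (u : ι → α) (v : ι → β) (h : α → β) :
    Set.range (fun i => (u i, v i)) = Set.range (fun y => (y, h y)) ↔
      Function.Surjective u ∧ ∀ i, v i = h (u i) := by
  constructor
  · intro hrange
    refine ⟨fun y => ?_, fun i => ?_⟩
    · obtain ⟨i, hi⟩ : (y, h y) ∈ Set.range (fun i => (u i, v i)) := hrange ▸ ⟨y, rfl⟩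
      exact ⟨i, congrArg Prod.fst hi⟩
    · obtain ⟨y, hy⟩ : (u i, v i) ∈ Set.range (fun y => (y, h y)) := hrange ▸ ⟨i, rfl⟩
      rw [Prod.mk.injEq] at hy
      rw [← hy.1, hy.2]
  · rintro ⟨hu, hv⟩
    ext w
    constructor
    · rintro ⟨i, rfl⟩
      exact ⟨u i, Prod.ext rfl (hv i).symm⟩
    · rintro ⟨y, rfl⟩
      obtain ⟨i, rfl⟩ := hu y
      exact ⟨i, Prod.ext rfl (hv i)⟩

end Graph

theorem range_linear_graph_eq_graph_iff {F : Type*} [Field F] [Finite F] {A B C D : F}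
    (hdet : A * D - B * C ≠ 0) (g h : F →+ F) :
    Set.range (fun y => (A * y + B * g y, C * y + D * g y)) = Set.range (fun y => (y, h y)) ↔
      ∀ y, C * y + D * g y = h (A * y + B * g y) := by
  rw [range_prodMk_eq_graph_iff]
  refine ⟨And.right, fun hgh => ⟨?_, hgh⟩⟩
  let first : F →+ F := AddMonoidHom.mulLeft A + (AddMonoidHom.mulLeft B).comp g
  suffices Function.Injective first from Finite.injective_iff_surjective.mp this
  refine (injective_iff_map_eq_zero first).mpr fun y hy => ?_
  change A * y + B * g y = 0 at hy
  have hsecond : C * y + D * g y = 0 := by rw [hgh, hy, map_zero]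
  have : (A * D - B * C) * y = 0 := by linear_combination D * hy - B * hsecond
  exact (mul_eq_zero.mp this).resolve_left hdet

theorem image_graph_eq_range_of_pow_comm {F : Type*} [Field F] [Finite F] (p : ℕ) [ExpChar F p]
    (k : ℕ) {f g : F → F} (hfg : ∀ x, f x ^ p ^ k = g (x ^ p ^ k)) (A B C D : F) :
    (fun w : F × F => (A * w.1 ^ p ^ k + B * w.2 ^ p ^ k, C * w.1 ^ p ^ k + D * w.2 ^ p ^ k)) ''
        {w | ∃ x, w = (x, f x)}
      = Set.range fun y => (A * y + B * g y, C * y + D * g y) := by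
  have hσ : Function.Surjective fun x : F => x ^ p ^ k :=
    Finite.injective_iff_surjective.mp (iterateFrobenius F p k).injective
  rw [setOf_exists_eq_prodMk, ← Set.range_comp]
  refine .trans ?_ (hσ.range_comp _)
  simp only [Function.comp_def, hfg]

theorem pow_pow_eq_pow_pow_mod {K : Type*} [GroupWithZero K] [Fintype K] {q n : ℕ}
    (hK : Fintype.card K = q ^ n) (x : K) (a : ℕ) : x ^ q ^ a = x ^ q ^ (a % n) := by
  conv_lhs => rw [← Nat.div_add_mod a n, pow_add, pow_mul x, pow_mul q, ← hK,
    FiniteField.pow_card_pow]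

theorem sum_range_pow_pow_sub_eq {K : Type*} [Field K] [Fintype K] {q n : ℕ} [NeZero n]
    (hK : Fintype.card K = q ^ n) (g : ℕ → K) :
    ∑ i ∈ range n, g i ^ q ^ (n - i) = ∑ j : Fin n, g (-j : Fin n) ^ q ^ (j : ℕ) := by
  rw [← Fin.sum_univ_eq_sum_range (fun i => g i ^ q ^ (n - i))]
  refine Fintype.sum_equiv (Equiv.neg (Fin n)) _ _ fun i => ?_
  rw [Equiv.neg_apply, neg_neg, pow_pow_eq_pow_pow_mod hK, Fin.val_neg']

section QPoly

variable {F : Type*}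

def qPoly [CommSemiring F] (q : ℕ) {n : ℕ} (c : Fin n → F) (x : F) : F :=
  c ⬝ᵥ fun j => x ^ q ^ (j : ℕ)

def qAdjoint [CommSemiring F] (q : ℕ) {n : ℕ} [NeZero n] (c : Fin n → F) : Fin n → F :=
  fun j => c (-j) ^ q ^ (j : ℕ)

def qComp [CommSemiring F] (q : ℕ) {n : ℕ} (c d : Fin n → F) : Fin n → F :=
  fun m => ∑ j, c j * d (m - j) ^ q ^ (j : ℕ)

section CommSemiring

variable [CommSemiring F]

theorem qPoly_eq_sum_range (q : ℕ) {n : ℕ} (a : ℕ → F) (x : F) :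
    qPoly q (fun j : Fin n => a j) x = ∑ i ∈ range n, a i * x ^ q ^ i :=
  Fin.sum_univ_eq_sum_range (fun i => a i * x ^ q ^ i) n

theorem qPoly_single_zero_add_smul (q : ℕ) {n : ℕ} [NeZero n] (b b' : F) (c : Fin n → F)
    (x : F) : qPoly q (Pi.single 0 b + b' • c) x = b * x + b' * qPoly q c x := by
  simp only [qPoly, add_dotProduct, smul_dotProduct, single_dotProduct, Fin.val_zero, pow_zero,
    pow_one, smul_eq_mul]

theorem qPoly_pow_expChar_pow (p : ℕ) [ExpChar F p] (q : ℕ) {n : ℕ} (c : Fin n → F) (x : F)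
    (k : ℕ) : qPoly q c x ^ p ^ k = qPoly q (fun j => c j ^ p ^ k) (x ^ p ^ k) := by
  simp only [qPoly, dotProduct, sum_pow_char_pow, mul_pow, pow_right_comm x]

variable {p e n : ℕ} [ExpChar F p]

theorem qPoly_add (c : Fin n → F) (x y : F) :
    qPoly (p ^ e) c (x + y) = qPoly (p ^ e) c x + qPoly (p ^ e) c y := by
  simp only [qPoly, ← pow_mul p e, add_pow_expChar_pow, ← dotProduct_add]
  rfl

theorem qComp_single_zero_add_smul [NeZero n] (c d : Fin n → F) (b b' : F) (m : Fin n) :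
    qComp (p ^ e) c (Pi.single 0 b + b' • d) m
      = c m * b ^ (p ^ e) ^ (m : ℕ) + ∑ j, c j * (b' * d (m - j)) ^ (p ^ e) ^ (j : ℕ) := by
  simp only [qComp, Pi.add_apply, Pi.smul_apply, smul_eq_mul, ← pow_mul p e, add_pow_expChar_pow,
    mul_add, sum_add_distrib]
  congr 1
  refine (Finset.sum_eq_single m (fun j _ hj => ?_) (by simp)).trans (by simp)
  rw [Pi.single_eq_of_ne (sub_ne_zero.mpr hj.symm), zero_pow (expChar_pow_pos F p _).ne',
    mul_zero]

theorem qComp_qAdjoint_single_zero_add_smul [NeZero n] (c d : Fin n → F) (b b' : F)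
    (m : Fin n) :
    qComp (p ^ e) (qAdjoint (p ^ e) c) (Pi.single 0 b + b' • d) m
      = (c (-m) * b) ^ (p ^ e) ^ (m : ℕ)
        + ∑ j, (b' * c (-j) * d (m - j)) ^ (p ^ e) ^ (j : ℕ) := by
  rw [qComp_single_zero_add_smul, qAdjoint, ← mul_pow]
  congr 1
  refine sum_congr rfl fun j _ => ?_
  rw [qAdjoint, ← mul_pow, mul_left_comm, mul_assoc]

end CommSemiring

section FiniteField

variable [Field F] [Fintype F]

theorem qPoly_pow {p e n : ℕ} [ExpChar F p] [NeZero n] (hF : Fintype.card F = (p ^ e) ^ n)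
    (c : Fin n → F) (x : F) (j : Fin n) :
    qPoly (p ^ e) c x ^ (p ^ e) ^ (j : ℕ)
      = qPoly (p ^ e) (fun m => c (m - j) ^ (p ^ e) ^ (j : ℕ)) x := by
  rw [qPoly, qPoly, dotProduct, dotProduct, ← pow_mul, sum_pow_char_pow]
  refine Fintype.sum_equiv (Equiv.addRight j) _ _ fun i => ?_
  rw [Equiv.coe_addRight, add_sub_cancel_right, Fin.val_add, ← pow_pow_eq_pow_pow_mod hF,
    pow_add, ← pow_mul, mul_pow, ← pow_mul, ← pow_mul]

theorem qPoly_comp {p e n : ℕ} [ExpChar F p] [NeZero n] (hF : Fintype.card F = (p ^ e) ^ n)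
    (c d : Fin n → F) (x : F) :
    qPoly (p ^ e) c (qPoly (p ^ e) d x) = qPoly (p ^ e) (qComp (p ^ e) c d) x := by
  rw [qPoly, dotProduct]
  simp only [qPoly_pow hF]
  simp only [qPoly, qComp, dotProduct, Finset.mul_sum, Finset.sum_mul, mul_assoc]
  exact Finset.sum_comm

theorem qPoly_injective {q n : ℕ} [NeZero n] (hF : Fintype.card F = q ^ n) :
    Function.Injective (qPoly q : (Fin n → F) → F → F) := by
  have hq : 1 < q := (Nat.one_lt_pow_iff (NeZero.ne n)).mp (hF ▸ Fintype.one_lt_card)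
  have hexp : Function.Injective fun j : Fin n => q ^ (j : ℕ) :=
    (Nat.pow_right_injective hq).comp Fin.val_injective
  intro c d hcd
  let P : F[X] := ∑ j, C (c j - d j) * X ^ q ^ (j : ℕ)
  have hP : P = 0 := by
    refine P.eq_zero_of_natDegree_lt_card_of_eval_eq_zero Function.injective_id (fun x => ?_) ?_
    · simp only [P, eval_finsetSum, eval_mul, eval_C, eval_pow, eval_X, id, sub_mul,
        sum_sub_distrib]
      exact sub_eq_zero.mpr (congrFun hcd x)
    · have hdeg : P.natDegree ≤ q ^ (n - 1) :=
        natDegree_sum_le_of_forall_le _ _ fun j _ => (natDegree_C_mul_X_pow_le _ _).trans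
          (Nat.pow_le_pow_right hq.le (Nat.le_sub_one_of_lt j.isLt))
      rw [hF]
      exact hdeg.trans_lt (Nat.pow_lt_pow_right hq (Nat.sub_one_lt (NeZero.ne n)))
  funext j
  have := congrArg (coeff · (q ^ (j : ℕ))) hP
  simpa only [P, finsetSum_coeff, coeff_C_mul_X_pow, hexp.eq_iff, Finset.sum_ite_eq, mem_univ,
    if_true, coeff_zero, sub_eq_zero] using this

theorem sum_range_eq_qPoly_qAdjoint {q n : ℕ} [NeZero n] (hF : Fintype.card F = q ^ n)
    (a : ℕ → F) (x : F) :
    ∑ i ∈ range n, a i ^ q ^ (n - i) * x ^ q ^ (n - i)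
      = qPoly q (qAdjoint q fun j : Fin n => a j) x := by
  simp only [← mul_pow, sum_range_pow_pow_sub_eq hF, qPoly, dotProduct, qAdjoint]

theorem forall_single_add_smul_eq_qComp_qAdjoint_iff {p e n : ℕ} [ExpChar F p] [NeZero n]
    (hF : Fintype.card F = (p ^ e) ^ n) (a : ℕ → F) (A B C D : F) (k : ℕ) :
    (∀ m, (Pi.single 0 C + D • fun j : Fin n => a j ^ p ^ k : Fin n → F) m
        = qComp (p ^ e) (qAdjoint (p ^ e) fun j : Fin n => a j)
            (Pi.single 0 A + B • fun j : Fin n => a j ^ p ^ k : Fin n → F) m)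
    ↔ (C + D * a 0 ^ p ^ k - a 0 * A
          = ∑ i ∈ range n, (B * a i * a i ^ p ^ k) ^ (p ^ e) ^ (n - i) ∧
        ∀ m : ℕ, 1 ≤ m → m ≤ n - 1 →
          D * a m ^ p ^ k - (a (n - m) * A) ^ (p ^ e) ^ m
            = ∑ i ∈ range n, (B * a i * a ((i + m) % n) ^ p ^ k) ^ (p ^ e) ^ (n - i)) := by
  set lhs : Fin n → F := Pi.single 0 C + D • fun j : Fin n => a j ^ p ^ k
  set rhs : Fin n → F := qComp (p ^ e) (qAdjoint (p ^ e) fun j : Fin n => a j)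
    (Pi.single 0 A + B • fun j : Fin n => a j ^ p ^ k)
  have hcoeff : ∀ m (hm : m < n), lhs ⟨m, hm⟩ = rhs ⟨m, hm⟩ ↔
        (if m = 0 then C else 0) + D * a m ^ p ^ k - (a ((n - m) % n) * A) ^ (p ^ e) ^ m
          = ∑ i ∈ range n, (B * a i * a ((i + m) % n) ^ p ^ k) ^ (p ^ e) ^ (n - i) := by
    intro m hm
    simp only [lhs, rhs, qComp_qAdjoint_single_zero_add_smul]
    rw [sum_range_pow_pow_sub_eq hF, sub_eq_iff_eq_add']
    simp only [Pi.add_apply, Pi.smul_apply, smul_eq_mul, Pi.single_apply, Fin.ext_iff,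
      Fin.val_zero, Fin.val_neg', Fin.val_sub, Nat.mod_add_mod]
  rw [Fin.forall_iff, forall₂_congr hcoeff,
    Nat.forall_lt_iff_zero_and_forall_one_le (Nat.pos_of_neZero n)]
  refine and_congr ?_ (forall₃_congr fun m h1 _ => ?_)
  · have hsum : ∑ i ∈ range n, (B * a i * a ((i + 0) % n) ^ p ^ k) ^ (p ^ e) ^ (n - i)
        = ∑ i ∈ range n, (B * a i * a i ^ p ^ k) ^ (p ^ e) ^ (n - i) :=
      sum_congr rfl fun i hi => by rw [add_zero, Nat.mod_eq_of_lt (mem_range.mp hi)]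
    rw [if_pos rfl, Nat.sub_zero, Nat.mod_self, pow_zero, pow_one, hsum]
  · rw [if_neg (by omega), zero_add, Nat.mod_eq_of_lt (by omega : n - m < n)]

end FiniteField

end QPoly

theorem stmt_4_general (p e n q : ℕ) (hp : p.Prime) (hn : 0 < n) (hq : q = p ^ e)
    (F : Type) [Field F] [Fintype F] (hF : Fintype.card F = q ^ n)
    (a : ℕ → F) (f fhat : F → F)
    (hf : ∀ x : F, f x = ∑ i ∈ Finset.range n, a i * x ^ q ^ i)
    (hfhat : ∀ x : F, fhat x = ∑ i ∈ Finset.range n, (a i) ^ q ^ (n - i) * x ^ q ^ (n - i))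
    (A B C D : F) (hABCD : A * D - B * C ≠ 0) (k : ℕ) :
    (fun w : F × F =>
        (A * w.1 ^ p ^ k + B * w.2 ^ p ^ k, C * w.1 ^ p ^ k + D * w.2 ^ p ^ k)) ''
        {w : F × F | ∃ x : F, w = (x, f x)}
      = {w : F × F | ∃ x : F, w = (x, fhat x)}
    ↔ (C + D * (a 0) ^ p ^ k - a 0 * A
          = ∑ i ∈ Finset.range n, (B * a i * (a i) ^ p ^ k) ^ q ^ (n - i) ∧
        ∀ m : ℕ, 1 ≤ m → m ≤ n - 1 →
          D * (a m) ^ p ^ k - (a (n - m) * A) ^ q ^ m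
            = ∑ i ∈ Finset.range n, (B * a i * (a ((i + m) % n)) ^ p ^ k) ^ q ^ (n - i)) := by
  subst hq
  have : Fact p.Prime := ⟨hp⟩
  have : CharP F p := charP_of_card_eq_prime_pow (hF.trans (pow_mul p e n).symm)
  have : NeZero n := ⟨hn.ne'⟩
  set aσ : Fin n → F := fun j => a j ^ p ^ k
  have hfσ : ∀ x, f x ^ p ^ k = qPoly (p ^ e) aσ (x ^ p ^ k) := fun x => by
    rw [hf, ← qPoly_eq_sum_range, qPoly_pow_expChar_pow]
  have hfhat_eq : fhat = qPoly (p ^ e) (qAdjoint (p ^ e) fun j : Fin n => a j) :=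
    funext fun x => (hfhat x).trans (sum_range_eq_qPoly_qAdjoint hF a x)
  rw [image_graph_eq_range_of_pow_comm p k hfσ, setOf_exists_eq_prodMk]
  refine (range_linear_graph_eq_graph_iff hABCD (AddMonoidHom.mk' _ (qPoly_add aσ))
    (AddMonoidHom.mk' fhat (hfhat_eq ▸ qPoly_add _))).trans ?_
  simp only [AddMonoidHom.mk'_apply, ← qPoly_single_zero_add_smul, hfhat_eq, qPoly_comp hF]
  rw [← funext_iff, (qPoly_injective hF).eq_iff, funext_iff]
  exact forall_single_add_smul_eq_qComp_qAdjoint_iff hF a A B C D k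

/-- the invertible σ-semilinear map `(x,y) ↦ (Ax^σ + By^σ, Cx^σ + Dy^σ)`,
with `σ : x ↦ x^{p^k}`, maps `U_f` onto `U_{f̂}` if and only if the `n` listed equations
hold (indices of the coefficients taken modulo `n`). -/
theorem stmt_4 (p e n q : ℕ) (hp : p.Prime) (he : 0 < e) (hn : 0 < n) (hq : q = p ^ e)
    (F : Type) [Field F] [Fintype F] (hF : Fintype.card F = q ^ n)
    (a : ℕ → F) (f fhat : F → F)
    (hf : ∀ x : F, f x = ∑ i ∈ Finset.range n, a i * x ^ q ^ i)
    (hfhat : ∀ x : F, fhat x = ∑ i ∈ Finset.range n, (a i) ^ q ^ (n - i) * x ^ q ^ (n - i))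
    (A B C D : F) (hABCD : A * D - B * C ≠ 0) (k : ℕ) :
    (fun w : F × F =>
        (A * w.1 ^ p ^ k + B * w.2 ^ p ^ k, C * w.1 ^ p ^ k + D * w.2 ^ p ^ k)) ''
        {w : F × F | ∃ x : F, w = (x, f x)}
      = {w : F × F | ∃ x : F, w = (x, fhat x)}
    ↔ (C + D * (a 0) ^ p ^ k - a 0 * A
          = ∑ i ∈ Finset.range n, (B * a i * (a i) ^ p ^ k) ^ q ^ (n - i) ∧
        ∀ m : ℕ, 1 ≤ m → m ≤ n - 1 →
          D * (a m) ^ p ^ k - (a (n - m) * A) ^ q ^ m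
            = ∑ i ∈ Finset.range n, (B * a i * (a ((i + m) % n)) ^ p ^ k) ^ q ^ (n - i)) :=
  stmt_4_general p e n q hp hn hq F hF a f fhat hf hfhat A B C D hABCD k
end

section
/- Let q = p^e > 4 be a prime power, let n ≥ 5, let δ be a generator of the multiplicative group of F_{q^n}, and let f(x) = δx^q + x^{q^{n-1}}, so that its adjoint is f̂(x) = x^q + δ^{q^{n-1}} x^{q^{n-1}}. Then there exist no A, B, C, D ∈ F_{q^n} with AD − BC ≠ 0 and no integer k ≥ 0 such that the map (x,y) ↦ (Ax^{p^k} + By^{p^k}, Cx^{p^k} + Dy^{p^k}) of F_{q^n} × F_{q^n} maps U_f onto U_{f̂}; that is, no invertible semilinear map of F_{q^n} × F_{q^n} carries U_f to U_{f̂}. (Since L_f = L_{f̂}, this shows the linear set L_f is not simple.) -/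
/-!
Undoing the Frobenius twist `σ = (·)^{p^k}`, an invertible semilinear map carrying `U_f` onto
`U_f̂` yields the identity `C y + D f^σ(y) = f̂(A y + B f^σ(y))` on `F_{q^n}`, where
`f^σ(y) = δ^σ y^q + y^{q^{n-1}}`. Both sides are `q`-polynomials of degree `< q^n`, so their
coefficients agree, and for `n ≥ 5` the exponents `1, q, q^2, q^{n-2}, q^{n-1}` are distinct.
The `y^{q^2}`-coefficient gives `B = 0`; the `y^q`- and `y^{q^{n-1}}`-coefficients combine to
`A^q = δ^{q^{n-1}} A^{q^{n-1}} δ^{p^k}`. Writing `A = δ^a` and reading exponents modulo `q - 1`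
(the norm to `F_q`) gives `q - 1 ∣ 1 + p^k`, impossible for `q > 4` because `p^k` is congruent
modulo `q - 1` to some `p^j ≤ q / p`.
-/

open Polynomial

theorem Nat.not_pow_sub_one_dvd_one_add_pow {p e : ℕ} (hp : 2 ≤ p) (hpe : 4 < p ^ e) (k : ℕ) :
    ¬ p ^ e - 1 ∣ 1 + p ^ k := by
  intro hdvd
  have he : 0 < e := Nat.pos_of_ne_zero fun h => by simp [h] at hpe
  have hmod : p ^ e ≡ 1 [MOD p ^ e - 1] := Nat.modEq_sub (by omega)
  have hk : p ^ k ≡ p ^ (k % e) [MOD p ^ e - 1] := by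
    conv_lhs => rw [← Nat.div_add_mod k e, pow_add, pow_mul]
    simpa using (hmod.pow (k / e)).mul_right (p ^ (k % e))
  have hdvd' : p ^ e - 1 ∣ 1 + p ^ (k % e) :=
    Nat.modEq_zero_iff_dvd.mp ((hk.add_left 1).symm.trans (Nat.modEq_zero_iff_dvd.mpr hdvd))
  have hsmall : 2 * p ^ (k % e) ≤ p ^ e :=
    calc 2 * p ^ (k % e) ≤ p ^ (k % e + 1) := by
          rw [pow_succ']; exact Nat.mul_le_mul_right _ hp
      _ ≤ p ^ e := Nat.pow_le_pow_right (by omega) (Nat.mod_lt k he)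
  have := Nat.le_of_dvd (by positivity) hdvd'
  omega

theorem FiniteField.coeff_eq_zero_of_forall_sum_mul_pow_eq_zero {R ι : Type*} [CommRing R]
    [IsDomain R] [Fintype R] [Fintype ι] {d : ι → ℕ} (hd : Function.Injective d)
    (hdeg : ∀ i, d i < Fintype.card R) {c : ι → R} (h : ∀ x, ∑ i, c i * x ^ d i = 0)
    (i : ι) : c i = 0 := by
  classical
  set P : R[X] := ∑ j, C (c j) * X ^ d j
  have hP : P = 0 := by
    refine eq_zero_of_natDegree_lt_card_of_eval_eq_zero P Function.injective_id
      (fun x => ?_) ?_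
    · simpa [P, eval_finsetSum] using h x
    · have hcard : 0 < Fintype.card R := Fintype.card_pos
      refine (natDegree_sum_le_of_forall_le _ _ fun j _ => ?_).trans_lt (Nat.sub_lt hcard one_pos)
      exact (natDegree_C_mul_X_pow_le _ _).trans (Nat.le_sub_one_of_lt (hdeg j))
  simpa [P, finsetSum_coeff, coeff_C_mul_X_pow, hd.eq_iff] using congrArg (coeff · (d i)) hP

theorem add_pow_pow_of_eq_expChar_pow {R : Type*} [CommSemiring R] {p e q : ℕ} [ExpChar R p]
    (hq : q = p ^ e) (x y : R) (i : ℕ) : (x + y) ^ q ^ i = x ^ q ^ i + y ^ q ^ i := by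
  subst hq; rw [← pow_mul, add_pow_expChar_pow]

theorem apply_eq_of_image_graph_subset {R : Type*} [Add R] [Mul R] (σ f g : R → R) {A B C D : R}
    (h : (fun w : R × R => (A * σ w.1 + B * σ w.2, C * σ w.1 + D * σ w.2)) ''
      {w | ∃ x, w = (x, f x)} ⊆ {w | ∃ x, w = (x, g x)}) (x : R) :
    C * σ x + D * σ (f x) = g (A * σ x + B * σ (f x)) := by
  obtain ⟨y, hy⟩ := h ⟨(x, f x), ⟨x, rfl⟩, rfl⟩
  simp only [Prod.mk.injEq] at hy
  rw [hy.1, hy.2]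

section

variable {F : Type*} [Field F] [Fintype F] {n q : ℕ}

theorem pow_pow_eq_of_card_eq (hF : Fintype.card F = q ^ n) (y : F) {i j : ℕ}
    (hij : i = n + j) :
    y ^ q ^ i = y ^ q ^ j := by
  rw [hij, pow_add, pow_mul, ← hF, FiniteField.pow_card]

theorem orderOf_mk0_eq_card_sub_one_of_forall_pow_eq {δ : F} (hδ0 : δ ≠ 0)
    (hgen : ∀ x : F, x ≠ 0 → ∃ m : ℕ, δ ^ m = x) :
    orderOf (Units.mk0 δ hδ0) = Fintype.card F - 1 := by
  have hzpowers (v : Fˣ) : v ∈ Subgroup.zpowers (Units.mk0 δ hδ0) := by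
    obtain ⟨m, hm⟩ := hgen v v.ne_zero
    exact ⟨m, Units.ext (by simp [hm])⟩
  rw [orderOf_eq_card_of_forall_mem_zpowers hzpowers, Nat.card_units, Nat.card_eq_fintype_card]

theorem natCast_eq_one_of_card_eq (hF : Fintype.card F = q ^ n) :
    ((q : ℕ) : ZMod (q - 1)) = 1 := by
  have hq0 : q ≠ 0 := by
    rintro rfl
    have := hF ▸ Fintype.one_lt_card (α := F)
    rcases n with _ | _ <;> simp at this
  exact_mod_cast (ZMod.natCast_eq_natCast_iff _ _ _).mpr
    (Nat.modEq_sub (Nat.one_le_iff_ne_zero.mpr hq0))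

theorem sub_one_dvd_of_pow_eq (hF : Fintype.card F = q ^ n) {δ : F} (hδ0 : δ ≠ 0)
    (hgen : ∀ x : F, x ≠ 0 → ∃ m : ℕ, δ ^ m = x) {A : F} (hA : A ≠ 0) {m : ℕ}
    (h : A ^ q = δ ^ q ^ (n - 1) * A ^ q ^ (n - 1) * δ ^ m) : q - 1 ∣ 1 + m := by
  obtain ⟨a, rfl⟩ := hgen A hA
  set u := Units.mk0 δ hδ0
  have hpow : u ^ (a * q) = u ^ (q ^ (n - 1) + a * q ^ (n - 1) + m) := Units.ext <| by
    simp only [u, Units.val_pow_eq_pow_val, Units.val_mul, Units.val_mk0, pow_add, pow_mul, h]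
  rw [pow_eq_pow_iff_modEq, orderOf_mk0_eq_card_sub_one_of_forall_pow_eq hδ0 hgen, hF] at hpow
  have hmod := (ZMod.natCast_eq_natCast_iff _ _ _).mpr
    (hpow.of_dvd (Nat.sub_one_dvd_pow_sub_one q n))
  push_cast [natCast_eq_one_of_card_eq hF, one_pow, mul_one] at hmod
  exact (ZMod.natCast_eq_zero_iff _ _).mp (by push_cast; linear_combination -hmod)

variable {p e : ℕ} [ExpChar F p]

theorem pow_q_of_linearized (hq : q = p ^ e) (hF : Fintype.card F = q ^ n) (hn : 1 ≤ n)
    (A B δ y : F) :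
    (A * y + B * (δ * y ^ q + y ^ q ^ (n - 1))) ^ q =
      B ^ q * y + A ^ q * y ^ q + B ^ q * δ ^ q * y ^ q ^ 2 := by
  have h (x z : F) : (x + z) ^ q = x ^ q + z ^ q := by
    simpa using add_pow_pow_of_eq_expChar_pow hq x z 1
  have h1 : (y ^ q ^ (n - 1)) ^ q = y := by
    rw [← pow_mul, ← pow_succ, pow_pow_eq_of_card_eq hF y (j := 0) (by omega), pow_zero,
      pow_one]
  rw [h, mul_add, h, mul_pow, mul_pow, mul_pow, mul_pow, ← pow_mul y q q, ← sq, h1]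
  ring

theorem pow_q_pow_pred_of_linearized (hq : q = p ^ e) (hF : Fintype.card F = q ^ n)
    (hn : 2 ≤ n) (A B δ y : F) :
    (A * y + B * (δ * y ^ q + y ^ q ^ (n - 1))) ^ q ^ (n - 1) =
      B ^ q ^ (n - 1) * δ ^ q ^ (n - 1) * y + B ^ q ^ (n - 1) * y ^ q ^ (n - 2)
        + A ^ q ^ (n - 1) * y ^ q ^ (n - 1) := by
  have h := add_pow_pow_of_eq_expChar_pow (R := F) hq
  have h1 : (y ^ q) ^ q ^ (n - 1) = y := by
    rw [← pow_mul, ← pow_succ', pow_pow_eq_of_card_eq hF y (j := 0) (by omega), pow_zero,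
      pow_one]
  have h2 : (y ^ q ^ (n - 1)) ^ q ^ (n - 1) = y ^ q ^ (n - 2) := by
    rw [← pow_mul, ← pow_add, pow_pow_eq_of_card_eq hF y (j := n - 2) (by omega)]
  rw [h, mul_add, h, mul_pow, mul_pow, mul_pow, mul_pow, h1, h2]
  ring

theorem coeff_conditions_of_forall_eq (hq : q = p ^ e) (hF : Fintype.card F = q ^ n)
    (hn : 5 ≤ n) {A B C D δ ε : F} (hδ : δ ≠ 0)
    (h : ∀ y : F, C * y + D * (δ * y ^ q + y ^ q ^ (n - 1)) =
      (A * y + B * (δ * y ^ q + y ^ q ^ (n - 1))) ^ q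
        + ε * (A * y + B * (δ * y ^ q + y ^ q ^ (n - 1))) ^ q ^ (n - 1)) :
    B = 0 ∧ A ^ q = D * δ ∧ ε * A ^ q ^ (n - 1) = D := by
  have hq1 : 1 < q := (Nat.one_lt_pow_iff (by omega)).mp (hF ▸ Fintype.one_lt_card)
  let d : Fin 5 → ℕ := ![0, 1, 2, n - 2, n - 1]
  have hd : Function.Injective d := by
    intro i j hij; fin_cases i <;> fin_cases j <;> simp [d] at hij ⊢ <;> omega
  have hdeg (j : Fin 5) : q ^ d j < Fintype.card F := by
    rw [hF]; exact Nat.pow_lt_pow_right hq1 (by fin_cases j <;> simp [d] <;> omega)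
  have hc := FiniteField.coeff_eq_zero_of_forall_sum_mul_pow_eq_zero
    ((Nat.pow_right_injective hq1).comp hd) hdeg
    (c := ![B ^ q + ε * B ^ q ^ (n - 1) * δ ^ q ^ (n - 1) - C, A ^ q - D * δ, B ^ q * δ ^ q,
      ε * B ^ q ^ (n - 1), ε * A ^ q ^ (n - 1) - D]) fun y => by
    have hy := h y
    rw [pow_q_of_linearized hq hF (by omega), pow_q_pow_pred_of_linearized hq hF (by omega)] at hy
    simp only [Function.comp_apply, Fin.sum_univ_five, Matrix.cons_val_zero, Matrix.cons_val_one,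
      Matrix.cons_val, pow_zero, pow_one, d]
    linear_combination -hy
  refine ⟨?_, sub_eq_zero.mp (hc 1), sub_eq_zero.mp (hc 4)⟩
  have hB : B ^ q * δ ^ q = 0 := hc 2
  exact pow_eq_zero_iff (by omega) |>.mp ((mul_eq_zero.mp hB).resolve_right (pow_ne_zero _ hδ))

end

theorem stmt_5_general (p e n q : ℕ) (hp : p.Prime) (hn : 5 ≤ n) (hq : q = p ^ e)
    (hq4 : 4 < q)
    (F : Type) [Field F] [Fintype F] (hF : Fintype.card F = q ^ n)
    (δ : F) (hδ0 : δ ≠ 0) (hδgen : ∀ x : F, x ≠ 0 → ∃ m : ℕ, δ ^ m = x)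
    (f fhat : F → F)
    (hf : ∀ x : F, f x = δ * x ^ q + x ^ q ^ (n - 1))
    (hfhat : ∀ x : F, fhat x = x ^ q + δ ^ q ^ (n - 1) * x ^ q ^ (n - 1)) :
    ¬ ∃ (A B C D : F) (k : ℕ), A * D - B * C ≠ 0 ∧
      (fun w : F × F =>
          (A * w.1 ^ p ^ k + B * w.2 ^ p ^ k, C * w.1 ^ p ^ k + D * w.2 ^ p ^ k)) ''
          {w : F × F | ∃ x : F, w = (x, f x)}
        = {w : F × F | ∃ x : F, w = (x, fhat x)} := by
  rintro ⟨A, B, C, D, k, hdet, hset⟩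
  have : Fact p.Prime := ⟨hp⟩
  have : CharP F p := charP_of_card_eq_prime_pow (by rw [hF, hq, ← pow_mul])
  let σ := iterateFrobenius F p k
  have hrel (y : F) : C * y + D * (σ δ * y ^ q + y ^ q ^ (n - 1)) =
      (A * y + B * (σ δ * y ^ q + y ^ q ^ (n - 1))) ^ q
        + δ ^ q ^ (n - 1) * (A * y + B * (σ δ * y ^ q + y ^ q ^ (n - 1))) ^ q ^ (n - 1) := by
    obtain ⟨x, rfl⟩ := (bijective_iterateFrobenius F p k).2 y
    have hσf : σ (f x) = σ δ * σ x ^ q + σ x ^ q ^ (n - 1) := by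
      rw [hf, map_add, map_mul, map_pow, map_pow]
    simpa only [hσf, hfhat] using apply_eq_of_image_graph_subset σ f fhat hset.subset x
  obtain ⟨hB, hAD, hDA⟩ := coeff_conditions_of_forall_eq hq hF hn (pow_ne_zero _ hδ0) hrel
  have hA : A ≠ 0 := by rintro rfl; simp [hB] at hdet
  have hdvd := sub_one_dvd_of_pow_eq hF hδ0 hδgen hA (m := p ^ k) (by rw [hAD, ← hDA])
  exact Nat.not_pow_sub_one_dvd_one_add_pow hp.two_le (hq ▸ hq4) k (hq ▸ hdvd)

/-- for `q > 4`, `n ≥ 5` and `δ` a generator of the multiplicative group of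
`F_{q^n}`, no invertible semilinear map of `F_{q^n} × F_{q^n}` carries `U_f` to `U_{f̂}`,
where `f(x) = δx^q + x^{q^{n-1}}`. -/
theorem stmt_5 (p e n q : ℕ) (hp : p.Prime) (he : 0 < e) (hn : 5 ≤ n) (hq : q = p ^ e)
    (hq4 : 4 < q)
    (F : Type) [Field F] [Fintype F] (hF : Fintype.card F = q ^ n)
    (δ : F) (hδ0 : δ ≠ 0) (hδgen : ∀ x : F, x ≠ 0 → ∃ m : ℕ, δ ^ m = x)
    (f fhat : F → F)
    (hf : ∀ x : F, f x = δ * x ^ q + x ^ q ^ (n - 1))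
    (hfhat : ∀ x : F, fhat x = x ^ q + δ ^ q ^ (n - 1) * x ^ q ^ (n - 1)) :
    ¬ ∃ (A B C D : F) (k : ℕ), A * D - B * C ≠ 0 ∧
      (fun w : F × F =>
          (A * w.1 ^ p ^ k + B * w.2 ^ p ^ k, C * w.1 ^ p ^ k + D * w.2 ^ p ^ k)) ''
          {w : F × F | ∃ x : F, w = (x, f x)}
        = {w : F × F | ∃ x : F, w = (x, fhat x)} :=
  stmt_5_general p e n q hp hn hq hq4 F hF δ hδ0 hδgen f fhat hf hfhat
end

section
/- Let p be a prime and q = p^e a prime power with q > 4. Then for every integer k ≥ 0, q − 1 does not divide p^k · q + 1. -/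
/-!
Modulo `q - 1 = p ^ e - 1` we have `q ≡ 1` and `p ^ e ≡ 1`, so
`p ^ k * q + 1 ≡ p ^ (k % e) + 1`. Since `k % e ≤ e - 1`, the positive number `p ^ (k % e) + 1` is at most `q / p + 1`, which is
smaller than `q - 1` once `q > 4`; so it cannot be a multiple of `q - 1`.
-/

namespace Nat

theorem pow_modEq_pow_mod_s6 {b : ℕ} (hb : 0 < b) (e k : ℕ) :
    b ^ k ≡ b ^ (k % e) [MOD b ^ e - 1] := by
  have hbe : b ^ e ≡ 1 [MOD b ^ e - 1] := modEq_sub (one_le_pow _ _ hb)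
  calc b ^ k = (b ^ e) ^ (k / e) * b ^ (k % e) := by rw [← pow_mul, ← pow_add, div_add_mod]
    _ ≡ 1 ^ (k / e) * b ^ (k % e) [MOD b ^ e - 1] := (hbe.pow _).mul_right _
    _ = b ^ (k % e) := by rw [one_pow, one_mul]

-- If `c * (b - 1) ≤ 2` then `c ≤ 2`, hence `c * b = c * (b - 1) + c ≤ 4`.
theorem add_two_lt_mul_of_four_lt {c b : ℕ} (hb : 2 ≤ b) (h : 4 < c * b) : c + 2 < c * b := by
  nlinarith

theorem pow_add_two_lt_pow {b r e : ℕ} (hb : 2 ≤ b) (hr : r < e) (h : 4 < b ^ e) :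
    b ^ r + 2 < b ^ e := by
  have hsplit : b ^ e = b ^ (e - 1) * b := by rw [← pow_succ, Nat.sub_add_cancel (by omega)]
  have hle : b ^ r ≤ b ^ (e - 1) := Nat.pow_le_pow_right (by omega) (by omega)
  have := add_two_lt_mul_of_four_lt hb (hsplit ▸ h)
  omega

theorem two_le_of_four_lt_pow {b e : ℕ} (h : 4 < b ^ e) : 2 ≤ b := by
  by_contra! hb
  have : b ^ e ≤ 1 := pow_le_one₀ (zero_le b) (by omega)
  omega

end Nat

theorem stmt_6_general (p e q : ℕ) (hq : q = p ^ e) (hq4 : 4 < q)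
    (k : ℕ) : ¬ (q - 1 ∣ p ^ k * q + 1) := by
  subst hq
  intro hdvd
  have he : 0 < e := Nat.pos_of_ne_zero fun h => by simp [h] at hq4
  have hp : 2 ≤ p := Nat.two_le_of_four_lt_pow hq4
  have hreduce : p ^ k * p ^ e + 1 ≡ p ^ (k % e) + 1 [MOD p ^ e - 1] := by
    simpa using ((Nat.pow_modEq_pow_mod_s6 (by omega) e k).mul (Nat.modEq_sub (by omega))).add_right 1
  have hdvd' : p ^ e - 1 ∣ p ^ (k % e) + 1 := (hreduce.dvd_iff dvd_rfl).1 hdvd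
  have hlt : p ^ (k % e) + 2 < p ^ e := Nat.pow_add_two_lt_pow hp (Nat.mod_lt k he) hq4
  have := Nat.le_of_dvd (by positivity) hdvd'
  omega

/-- if `q = p^e > 4` is a prime power, then `q - 1` never divides
`p^k · q + 1`. -/
theorem stmt_6 (p e q : ℕ) (hp : p.Prime) (he : 0 < e) (hq : q = p ^ e) (hq4 : 4 < q)
    (k : ℕ) : ¬ (q - 1 ∣ p ^ k * q + 1) :=
  stmt_6_general p e q hq hq4 k
end

section
/- Let f(x) = Σ_{i=0}^{3} a_i x^{q^i} and g(x) = Σ_{i=0}^{3} b_i x^{q^i} be q-polynomials over F_{q^4} with D_f = D_g. Then N(a_1) + N(a_2) + N(a_3) + a_1^{1+q^2}·a_3^{q+q^3} + a_1^{q+q^3}·a_3^{1+q^2} + Tr(a_1·a_2^{q+q^2}·a_3^{q^3}) = N(b_1) + N(b_2) + N(b_3) + b_1^{1+q^2}·b_3^{q+q^3} + b_1^{q+q^3}·b_3^{1+q^2} + Tr(b_1·b_2^{q+q^2}·b_3^{q^3}). -/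
/-!
If `f` is additive, the nonzero solutions of `f x / x = y`, together with `0`, form the kernel
of `x ↦ f x - y * x`, a nontrivial `𝔽_p`-subspace whenever `y ∈ D_f`; so every nonempty fibre of
`x ↦ f x / x` has size `≡ -1 (mod p)`, and `∑_{x ≠ 0} h (f x / x) = -∑_{y ∈ D_f} h y` depends
only on `D_f`, for every `h : F → F`.

With `h = id`, orthogonality of the characters `x ↦ x ^ m` of `F^*` gives `a₀ = b₀`. With
`h y = N (y - a₀)`, expand `N` as the product of the four Frobenius conjugates: a monomial
survives the sum over `x` only when its exponent `∑ₖ q ^ σ(k) - ∑ₖ q ^ k` is divisible by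
`q ^ 4 - 1`, that is when `σ` is a permutation. So the sum is minus the permanent of the Dickson
matrix of `f - a₀ x`. That matrix has zero diagonal, so only the nine derangements contribute, and
they add up to the expression in the statement.
-/

/-- The norm of `F_{q^4}` over `F_q`. -/
def normq4 (q : ℕ) {F : Type} [Field F] (x : F) : F := x ^ (1 + q + q ^ 2 + q ^ 3)

/-- The trace of `F_{q^4}` over `F_q`. -/
def trq4 (q : ℕ) {F : Type} [Field F] (x : F) : F := x + x ^ q + x ^ q ^ 2 + x ^ q ^ 3

open Finset Function

theorem Matrix.permanent_eq_sum_injective {n R : Type*} [Fintype n] [DecidableEq n]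
    [CommSemiring R] (M : Matrix n n R) :
    M.permanent = ∑ σ : n → n, if Injective σ then ∏ i, M i (σ i) else 0 := by
  rw [← permanent_transpose, permanent, ← sum_filter]
  refine sum_bij (fun σ _ => ⇑σ) (by simp [Equiv.injective])
    (fun σ _ τ _ h => Equiv.ext (congrFun h)) (fun σ hσ => ?_) (fun σ _ => rfl)
  exact ⟨Equiv.ofBijective σ (mem_filter.mp hσ).2.bijective_of_finite, mem_univ _, rfl⟩

theorem Fintype.sum_fun_fin_four {M α : Type*} [AddCommMonoid M] [Fintype α]
    (G : (Fin 4 → α) → M) : ∑ σ, G σ = ∑ a, ∑ b, ∑ c, ∑ d, G ![a, b, c, d] := by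
  simp only [← (Fin.consEquiv fun _ => α).sum_comp, Fintype.sum_prod_type, Fintype.sum_unique]
  rfl

theorem IsCyclic.forall_pow_eq_pow_iff_modEq {G : Type*} [Group G] [Finite G] [IsCyclic G]
    (A B : ℕ) : (∀ u : G, u ^ A = u ^ B) ↔ A ≡ B [MOD Nat.card G] := by
  obtain ⟨g, hg⟩ := IsCyclic.exists_generator (α := G)
  refine ⟨fun h => ?_, fun h u => pow_eq_pow_iff_modEq.mpr (h.of_dvd (orderOf_dvd_natCard u))⟩
  rw [← orderOf_eq_card_of_forall_mem_zpowers hg]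
  exact pow_eq_pow_iff_modEq.mp (h g)

section Exponents

variable {q : ℕ}

theorem pow_modEq_one_iff (hq : 2 ≤ q) {j : ℕ} (hj : j < 4) :
    q ^ j ≡ 1 [MOD q ^ 4 - 1] ↔ j = 0 := by
  have h3 : q ^ j ≤ q ^ 3 := Nat.pow_le_pow_right (by omega) (by omega)
  have h4 : 2 * q ^ 3 ≤ q ^ 4 := by rw [pow_succ' q 3]; exact Nat.mul_le_mul_right _ hq
  have h8 : 1 < q ^ 3 := Nat.one_lt_pow (by norm_num) (by omega)
  refine ⟨fun h => ?_, by rintro rfl; rfl⟩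
  have := Nat.ModEq.eq_of_lt_of_lt h (by omega) (by omega)
  exact (Nat.pow_eq_one.mp this).resolve_left (by omega)

theorem sum_pow_fin_four_lt (hq : 5 ≤ q) (τ : Fin 4 → Fin 4) :
    ∑ k, q ^ (τ k : ℕ) < q ^ 4 - 1 := by
  have hle : ∑ k, q ^ (τ k : ℕ) ≤ 4 * q ^ 3 := by
    simpa using sum_le_card_nsmul univ _ (q ^ 3) fun k _ =>
      Nat.pow_le_pow_right (by omega) (Nat.le_of_lt_succ (τ k).isLt)
  have : 5 * q ^ 3 ≤ q ^ 4 := by rw [pow_succ' q 3]; exact Nat.mul_le_mul_right _ hq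
  have : 1 < q ^ 3 := Nat.one_lt_pow (by norm_num) (by omega)
  omega

/-- The number of `k` with `σ k = j` is the `j`-th base-`q` digit of `∑ₖ q ^ σ(k)`. -/
theorem injective_of_sum_pow_eq (hq : 5 ≤ q) {σ : Fin 4 → Fin 4}
    (h : ∑ k, q ^ (σ k : ℕ) = ∑ k : Fin 4, q ^ (k : ℕ)) : Injective σ := by
  set n : Fin 4 → ℕ := fun j => #{k | σ k = j}
  have hn : ∀ j, n j < q := fun j => (card_le_univ _).trans_lt (by simp; omega)
  have hsum : ∑ k, q ^ (σ k : ℕ) = ∑ j, n j * q ^ (j : ℕ) := by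
    rw [← sum_fiberwise univ σ]
    refine sum_congr rfl fun j _ => ?_
    rw [sum_congr rfl fun k hk => by rw [(mem_filter.mp hk).2], sum_const, smul_eq_mul]
  have hdigits : [n 0, n 1, n 2, n 3] = [1, 1, 1, 1] := by
    refine Nat.ofDigits_inj_of_len_eq (b := q) (by omega) rfl (by simp [hn]) (by simp; omega) ?_
    rw [hsum, Fin.sum_univ_four, Fin.sum_univ_four] at h
    simp only [Nat.ofDigits, Nat.cast_id]
    simp only [Fin.isValue, Fin.coe_ofNat_eq_mod, Nat.zero_mod, pow_zero, mul_one, Nat.one_mod,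
      pow_one, Nat.reduceMod] at h
    linarith
  have hone : ∀ j, n j = 1 := by
    simp only [List.cons.injEq, and_true] at hdigits
    intro j
    fin_cases j <;> simp [hdigits]
  intro i k hik
  exact card_le_one.mp (hone (σ i)).le i (by simp) k (by simp [hik])

theorem injective_of_sum_pow_modEq_of_le_four (hq : 2 ≤ q) (hq4 : q ≤ 4) {σ : Fin 4 → Fin 4}
    (h : ∑ k, q ^ (σ k : ℕ) ≡ ∑ k : Fin 4, q ^ (k : ℕ) [MOD q ^ 4 - 1]) : Injective σ := by
  have hσ : σ = ![σ 0, σ 1, σ 2, σ 3] := by ext i; fin_cases i <;> rfl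
  rw [Fin.sum_univ_four, Fin.sum_univ_four] at h
  rw [hσ]
  revert h
  generalize σ 0 = a, σ 1 = b, σ 2 = c, σ 3 = d
  interval_cases q <;> revert a b c d <;> decide

theorem sum_pow_modEq_iff_injective (hq : 2 ≤ q) (σ : Fin 4 → Fin 4) :
    ∑ k, q ^ (σ k : ℕ) ≡ ∑ k : Fin 4, q ^ (k : ℕ) [MOD q ^ 4 - 1] ↔ Injective σ := by
  refine ⟨fun h => ?_, fun hσ => ?_⟩
  · rcases le_or_gt q 4 with hq4 | hq4
    · exact injective_of_sum_pow_modEq_of_le_four hq hq4 h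
    · exact injective_of_sum_pow_eq hq4 (Nat.ModEq.eq_of_lt_of_lt h (sum_pow_fin_four_lt hq4 σ)
        (sum_pow_fin_four_lt hq4 id))
  · rw [← (Equiv.ofBijective σ hσ.bijective_of_finite).sum_comp (fun j => q ^ (j : ℕ))]
    rfl

end Exponents

section Frobenius

variable {F : Type*} [Field F] [Fintype F] {q n : ℕ}

theorem exists_eq_ringChar_pow_of_card_eq_pow (hn : n ≠ 0) (hF : Fintype.card F = q ^ n) :
    ∃ m, q = ringChar F ^ m := by
  obtain ⟨k, hp, hk⟩ := FiniteField.card F (ringChar F)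
  obtain ⟨m, -, hm⟩ := (Nat.dvd_prime_pow hp).mp (hk ▸ hF ▸ dvd_pow_self q hn)
  exact ⟨m, hm⟩

theorem add_pow_pow_of_card_eq_pow (hn : n ≠ 0) (hF : Fintype.card F = q ^ n) (x y : F)
    (k : ℕ) : (x + y) ^ q ^ k = x ^ q ^ k + y ^ q ^ k := by
  obtain ⟨m, rfl⟩ := exists_eq_ringChar_pow_of_card_eq_pow hn hF
  have : Fact (ringChar F).Prime := ⟨CharP.char_is_prime F _⟩
  rw [← pow_mul]
  exact add_pow_char_pow x y _ _

theorem sum_pow_pow_of_card_eq_pow (hn : n ≠ 0) (hF : Fintype.card F = q ^ n) {ι : Type*}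
    (s : Finset ι) (g : ι → F) (k : ℕ) : (∑ i ∈ s, g i) ^ q ^ k = ∑ i ∈ s, g i ^ q ^ k := by
  obtain ⟨m, rfl⟩ := exists_eq_ringChar_pow_of_card_eq_pow hn hF
  have : Fact (ringChar F).Prime := ⟨CharP.char_is_prime F _⟩
  rw [← pow_mul]
  exact sum_pow_char_pow _ _ s g

theorem pow_pow_eq_pow_pow_mod_s7 (hF : Fintype.card F = q ^ n) (x : F) (m : ℕ) :
    x ^ q ^ m = x ^ q ^ (m % n) := by
  conv_lhs => rw [← Nat.div_add_mod m n, pow_add, pow_mul q n, ← hF, pow_mul x,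
    FiniteField.pow_card_pow]

theorem two_le_of_card_eq_pow_s7 (hF : Fintype.card F = q ^ n) : 2 ≤ q := by
  by_contra! hq
  have : q ^ n ≤ 1 := pow_le_one' (by omega) n
  have := Fintype.one_lt_card (α := F)
  omega

end Frobenius

section Fibres

variable {F : Type*} [Field F] [Fintype F]

theorem AddSubgroup.cast_natCard_eq_zero (H : AddSubgroup F) (hH : H ≠ ⊥) :
    (Nat.card H : F) = 0 := by
  obtain ⟨n, hp, hn⟩ := FiniteField.card F (ringChar F)
  have hdvd : Nat.card H ∣ ringChar F ^ (n : ℕ) := by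
    rw [← hn, ← Nat.card_eq_fintype_card]
    exact H.card_addSubgroup_dvd_card
  obtain ⟨m, -, hm⟩ := (Nat.dvd_prime_pow hp).mp hdvd
  have hm0 : m ≠ 0 := by
    rintro rfl
    exact hH (AddSubgroup.card_eq_one.mp (by rw [hm, pow_zero]))
  rw [hm, Nat.cast_pow, ringChar.Nat.cast_ringChar, zero_pow hm0]

variable [DecidableEq F]

/-- Together with `0`, the fibre over `y` is the kernel of `x ↦ f x - y * x`. -/
theorem cast_card_units_div_eq_neg_one (f : F →+ F) {y : F} (hy : ∃ u : Fˣ, f u / u = y) :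
    (#{u : Fˣ | f u / u = y} : F) = -1 := by
  set K := (f - AddMonoidHom.mulLeft y).ker
  have hmem : ∀ x, x ∈ K ↔ f x = y * x := fun x => by
    simp [K, AddMonoidHom.mem_ker, sub_eq_zero]
  have hK : ({x | x ∈ K} : Finset F) = insert 0 (({u | f u / u = y} : Finset Fˣ).map
      ⟨Units.val, Units.val_injective⟩) := by
    ext x
    rcases eq_or_ne x 0 with rfl | hx
    · simp
    · simp only [hmem, mem_filter, mem_univ, true_and, mem_insert, hx, false_or, mem_map,
        Embedding.coeFn_mk]
      refine ⟨fun h => ⟨Units.mk0 x hx, by simp [h, hx], rfl⟩, ?_⟩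
      rintro ⟨u, hu, rfl⟩
      rw [← hu, div_mul_cancel₀ _ u.ne_zero]
  have hcard : Nat.card K = #{u : Fˣ | f u / u = y} + 1 := by
    rw [Nat.card_eq_fintype_card, Fintype.card_subtype, hK, card_insert_of_notMem (by simp),
      card_map]
  have hK0 : K ≠ ⊥ := by
    obtain ⟨u, rfl⟩ := hy
    intro h
    have : (u : F) ∈ K := (hmem u).mpr (by field_simp)
    exact u.ne_zero (by rwa [h, AddSubgroup.mem_bot] at this)
  have := AddSubgroup.cast_natCard_eq_zero K hK0
  rw [hcard, Nat.cast_succ] at this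
  linear_combination this

theorem sum_units_comp_div (f : F →+ F) (h : F → F) :
    ∑ u : Fˣ, h (f u / u) = -∑ y ∈ univ.image (fun u : Fˣ => f u / u), h y := by
  rw [sum_comp, ← sum_neg_distrib]
  refine sum_congr rfl fun y hy => ?_
  obtain ⟨u, -, rfl⟩ := mem_image.mp hy
  rw [nsmul_eq_mul, cast_card_units_div_eq_neg_one f ⟨u, rfl⟩, neg_one_mul]

theorem sum_units_comp_div_eq_of_ratios_eq (f g : F →+ F)
    (hfg : {y | ∃ x, x ≠ 0 ∧ f x / x = y} = {y | ∃ x, x ≠ 0 ∧ g x / x = y}) (h : F → F) :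
    ∑ u : Fˣ, h (f u / u) = ∑ u : Fˣ, h (g u / u) := by
  have : univ.image (fun u : Fˣ => f u / u) = univ.image (fun u : Fˣ => g u / u) := by
    ext y
    simp only [mem_image, mem_univ, true_and]
    rw [Units.exists_iff_ne_zero (p := fun x => f x / x = y),
      Units.exists_iff_ne_zero (p := fun x => g x / x = y)]
    exact Set.ext_iff.mp hfg y
  rw [sum_units_comp_div, sum_units_comp_div, this]

theorem sum_units_pow_div_pow (A B : ℕ) :
    ∑ u : Fˣ, (u : F) ^ A / (u : F) ^ B = if A ≡ B [MOD Fintype.card F - 1] then -1 else 0 := by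
  let φ : Fˣ →* F := (Units.coeHom F).comp (powMonoidHom A / powMonoidHom B)
  have hφ : φ = 1 ↔ A ≡ B [MOD Fintype.card F - 1] := by
    rw [← Fintype.card_units, ← Nat.card_eq_fintype_card,
      ← IsCyclic.forall_pow_eq_pow_iff_modEq, DFunLike.ext_iff]
    simp [φ, Units.ext_iff, div_eq_one_iff_eq]
  have hcard : (Fintype.card Fˣ : F) = -1 := by
    rw [Fintype.card_units, Nat.cast_sub Fintype.card_pos, FiniteField.cast_card_eq_zero]
    simp
  convert sum_hom_units φ using 1
  · simp [φ]
  · simp only [hφ]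
    split_ifs <;> simp [hcard]

end Fibres

section LinearizedPolynomials

variable {F : Type} [Field F] {q : ℕ}

def linPoly (q : ℕ) (c : Fin 4 → F) (x : F) : F := ∑ i, c i * x ^ q ^ (i : ℕ)

def dicksonMatrix (q : ℕ) (c : Fin 4 → F) : Matrix (Fin 4) (Fin 4) F :=
  Matrix.of fun k j => c (j - k) ^ q ^ (k : ℕ)

theorem linPoly_div_sub_coeff_zero (c : Fin 4 → F) {x : F} (hx : x ≠ 0) :
    linPoly q c x / x - c 0 = linPoly q (update c 0 0) x / x := by
  simp only [linPoly, Fin.sum_univ_four, Fin.isValue, Fin.coe_ofNat_eq_mod, Nat.zero_mod,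
    pow_zero, pow_one, Nat.one_mod, Nat.reduceMod, update_self, zero_mul, ne_eq, one_ne_zero,
    not_false_eq_true, update_of_ne, zero_add, Fin.reduceEq]
  field_simp
  ring

theorem normq4_eq_prod (y : F) : normq4 q y = ∏ k : Fin 4, y ^ q ^ (k : ℕ) := by
  simp [normq4, Fin.prod_univ_four, pow_add]

variable [Fintype F]

theorem linPoly_add (hF : Fintype.card F = q ^ 4) (c : Fin 4 → F) (x y : F) :
    linPoly q c (x + y) = linPoly q c x + linPoly q c y := by
  simp only [linPoly, add_pow_pow_of_card_eq_pow four_ne_zero hF, mul_add, sum_add_distrib]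

theorem linPoly_div_pow_pow (hF : Fintype.card F = q ^ 4) (c : Fin 4 → F) (x : F) (k : Fin 4) :
    (linPoly q c x / x) ^ q ^ (k : ℕ)
      = ∑ j, c (j - k) ^ q ^ (k : ℕ) * (x ^ q ^ (j : ℕ) / x ^ q ^ (k : ℕ)) := by
  rw [div_pow, linPoly, sum_pow_pow_of_card_eq_pow four_ne_zero hF, sum_div]
  refine Fintype.sum_equiv (Equiv.addRight k) _ _ fun i => ?_
  simp only [Equiv.coe_addRight, add_sub_cancel_right, Fin.val_add]
  rw [mul_pow, ← pow_mul, ← pow_add, pow_pow_eq_pow_pow_mod_s7 hF x (i + k), mul_div_assoc]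

theorem permanent_dicksonMatrix_of_coeff_zero (hF : Fintype.card F = q ^ 4) (c : Fin 4 → F)
    (hc : c 0 = 0) :
    (dicksonMatrix q c).permanent
      = normq4 q (c 1) + normq4 q (c 2) + normq4 q (c 3)
        + c 1 ^ (1 + q ^ 2) * c 3 ^ (q + q ^ 3) + c 1 ^ (q + q ^ 3) * c 3 ^ (1 + q ^ 2)
        + trq4 q (c 1 * c 2 ^ (q + q ^ 2) * c 3 ^ q ^ 3) := by
  have hq0 : q ≠ 0 := by have := two_le_of_card_eq_pow_s7 hF; omega
  have h4 : ∀ x : F, x ^ q ^ 4 = x := fun x => hF ▸ FiniteField.pow_card x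
  have h5 : ∀ x : F, x ^ q ^ 5 = x ^ q := fun x =>
    (pow_pow_eq_pow_pow_mod_s7 hF x 5).trans (by norm_num)
  have h6 : ∀ x : F, x ^ q ^ 6 = x ^ q ^ 2 := fun x =>
    (pow_pow_eq_pow_pow_mod_s7 hF x 6).trans (by norm_num)
  rw [Matrix.permanent_eq_sum_injective, Fintype.sum_fun_fin_four]
  simp +decide only [Fin.sum_univ_four, Fin.prod_univ_four]
  simp only [↓reduceIte, add_zero, dicksonMatrix, Fin.isValue, Matrix.cons_val_zero,
    Matrix.of_apply, sub_self, hc, Fin.coe_ofNat_eq_mod, Nat.zero_mod, pow_zero, pow_one,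
    Matrix.cons_val_one, Nat.one_mod, ne_eq, hq0, not_false_eq_true, zero_pow, mul_zero,
    Matrix.cons_val, Nat.reduceMod, Nat.pow_eq_zero, OfNat.ofNat_ne_zero, and_true, Nat.mod_succ,
    Fin.reduceSub, zero_mul, sub_zero, zero_sub, zero_add, show (-1 : Fin 4) = 3 from rfl,
    show (-2 : Fin 4) = 2 from rfl, show (-3 : Fin 4) = 1 from rfl]
  simp only [normq4, trq4]
  ring_nf
  simp only [h4, h5, h6]
  ring

variable [DecidableEq F]

theorem sum_units_linPoly_div (hF : Fintype.card F = q ^ 4) (c : Fin 4 → F) :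
    ∑ u : Fˣ, linPoly q c u / u = -c 0 := by
  have hq := two_le_of_card_eq_pow_s7 hF
  calc ∑ u : Fˣ, linPoly q c u / u
      = ∑ u : Fˣ, (linPoly q c u / u) ^ q ^ ((0 : Fin 4) : ℕ) := by simp
    _ = ∑ j, c j * ∑ u : Fˣ, (u : F) ^ q ^ (j : ℕ) / (u : F) ^ q ^ 0 := by
        simp_rw [linPoly_div_pow_pow hF, mul_sum]
        rw [sum_comm]
        simp
    _ = -c 0 := by
        simp_rw [sum_units_pow_div_pow, hF, pow_zero, pow_modEq_one_iff hq (Fin.isLt _)]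
        simp [Fin.val_eq_zero_iff]

theorem sum_units_normq4_linPoly_div (hF : Fintype.card F = q ^ 4) (c : Fin 4 → F) :
    ∑ u : Fˣ, normq4 q (linPoly q c u / u) = -(dicksonMatrix q c).permanent := by
  have hq := two_le_of_card_eq_pow_s7 hF
  simp_rw [normq4_eq_prod, linPoly_div_pow_pow hF, Fintype.prod_sum, prod_mul_distrib,
    prod_div_distrib, prod_pow_eq_pow_sum]
  rw [sum_comm]
  simp_rw [← mul_sum, sum_units_pow_div_pow, hF, sum_pow_modEq_iff_injective hq,
    Matrix.permanent_eq_sum_injective]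
  simp only [dicksonMatrix, Matrix.of_apply, mul_ite, mul_neg, mul_one, mul_zero,
    ← sum_neg_distrib, neg_ite, neg_zero]

theorem sum_units_normq4_linPoly_div_sub (hF : Fintype.card F = q ^ 4) (c : Fin 4 → F) :
    ∑ u : Fˣ, normq4 q (linPoly q c u / u - c 0)
      = -(normq4 q (c 1) + normq4 q (c 2) + normq4 q (c 3)
        + c 1 ^ (1 + q ^ 2) * c 3 ^ (q + q ^ 3) + c 1 ^ (q + q ^ 3) * c 3 ^ (1 + q ^ 2)
        + trq4 q (c 1 * c 2 ^ (q + q ^ 2) * c 3 ^ q ^ 3)) := by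
  simp_rw [linPoly_div_sub_coeff_zero c (Units.ne_zero _), sum_units_normq4_linPoly_div hF,
    permanent_dicksonMatrix_of_coeff_zero hF _ (update_self _ _ _)]
  simp

end LinearizedPolynomials

theorem stmt_7_general (q : ℕ)
    (F : Type) [Field F] [Fintype F] (hF : Fintype.card F = q ^ 4)
    (a b : ℕ → F) (f g : F → F)
    (hf : ∀ x : F, f x = ∑ i ∈ Finset.range 4, a i * x ^ q ^ i)
    (hg : ∀ x : F, g x = ∑ i ∈ Finset.range 4, b i * x ^ q ^ i)
    (hD : {y : F | ∃ x : F, x ≠ 0 ∧ f x / x = y} = {y : F | ∃ x : F, x ≠ 0 ∧ g x / x = y}) :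
    normq4 q (a 1) + normq4 q (a 2) + normq4 q (a 3)
        + (a 1) ^ (1 + q ^ 2) * (a 3) ^ (q + q ^ 3)
        + (a 1) ^ (q + q ^ 3) * (a 3) ^ (1 + q ^ 2)
        + trq4 q (a 1 * (a 2) ^ (q + q ^ 2) * (a 3) ^ q ^ 3)
      = normq4 q (b 1) + normq4 q (b 2) + normq4 q (b 3)
        + (b 1) ^ (1 + q ^ 2) * (b 3) ^ (q + q ^ 3)
        + (b 1) ^ (q + q ^ 3) * (b 3) ^ (1 + q ^ 2)
        + trq4 q (b 1 * (b 2) ^ (q + q ^ 2) * (b 3) ^ q ^ 3) := by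
  classical
  obtain rfl : f = linPoly q fun i => a i := funext fun x => by rw [hf, sum_range]; rfl
  obtain rfl : g = linPoly q fun i => b i := funext fun x => by rw [hg, sum_range]; rfl
  have hsum := sum_units_comp_div_eq_of_ratios_eq (.mk' _ (linPoly_add hF fun i : Fin 4 => a i))
    (.mk' _ (linPoly_add hF fun i : Fin 4 => b i)) hD
  have h0 : a 0 = b 0 := by simpa [sum_units_linPoly_div hF] using hsum id
  have hα := sum_units_normq4_linPoly_div_sub hF fun i : Fin 4 => a i
  have hβ := sum_units_normq4_linPoly_div_sub hF fun i : Fin 4 => b i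
  simp only [Fin.coe_ofNat_eq_mod, Nat.reduceMod] at hα hβ
  have hN := hsum fun y => normq4 q (y - a 0)
  simp only [AddMonoidHom.mk'_apply] at hN
  rw [hα, h0, hβ] at hN
  exact neg_inj.mp hN

/-- an equation relating the coefficients of two q-polynomials over
`F_{q^4}` defining the same linear set of PG(1,q^4). -/
theorem stmt_7 (p e q : ℕ) (hp : p.Prime) (he : 0 < e) (hq : q = p ^ e)
    (F : Type) [Field F] [Fintype F] (hF : Fintype.card F = q ^ 4)
    (a b : ℕ → F) (f g : F → F)
    (hf : ∀ x : F, f x = ∑ i ∈ Finset.range 4, a i * x ^ q ^ i)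
    (hg : ∀ x : F, g x = ∑ i ∈ Finset.range 4, b i * x ^ q ^ i)
    (hD : {y : F | ∃ x : F, x ≠ 0 ∧ f x / x = y} = {y : F | ∃ x : F, x ≠ 0 ∧ g x / x = y}) :
    normq4 q (a 1) + normq4 q (a 2) + normq4 q (a 3)
        + (a 1) ^ (1 + q ^ 2) * (a 3) ^ (q + q ^ 3)
        + (a 1) ^ (q + q ^ 3) * (a 3) ^ (1 + q ^ 2)
        + trq4 q (a 1 * (a 2) ^ (q + q ^ 2) * (a 3) ^ q ^ 3)
      = normq4 q (b 1) + normq4 q (b 2) + normq4 q (b 3)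
        + (b 1) ^ (1 + q ^ 2) * (b 3) ^ (q + q ^ 3)
        + (b 1) ^ (q + q ^ 3) * (b 3) ^ (1 + q ^ 2)
        + trq4 q (b 1 * (b 2) ^ (q + q ^ 2) * (b 3) ^ q ^ 3) :=
  stmt_7_general q F hF a b f g hf hg hD
end

section
/- Let f(x) = Σ_{i=0}^{n-1} a_i x^{q^i} be a q-polynomial over F_{q^n} and let f̂ be its adjoint. Then the orthogonal complement of the F_q-subspace U_f = {(x,f(x)) : x ∈ F_{q^n}} of F_{q^n} × F_{q^n} with respect to the nondegenerate alternating F_q-bilinear form η'((x,y),(u,v)) = Tr_{q^n/q}(xv − yu) equals U_{f̂} = {(x, f̂(x)) : x ∈ F_{q^n}}. -/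
/-!
Write `Tr x = ∑_{i<n} x ^ q ^ i`. Since `x ↦ x ^ q` is a power of the Frobenius fixing `Tr`, each
term of `Tr (u * f x)` can be raised to the power `q ^ (n - i)`, which gives
`Tr (u * f x) = Tr (f̂ u * x)`. Hence `(u, v)` is orthogonal to `U_f` iff `Tr ((f̂ u - v) * x) = 0`
for all `x`, i.e. iff `v = f̂ u`: the trace form is nondegenerate because `∑_{i<n} X ^ q ^ i` has
degree `q ^ (n - 1) < |F|`, so `Tr` does not vanish identically.
-/

open Finset Polynomial

def qTrace {F : Type*} [Field F] (q n : ℕ) (x : F) : F := ∑ i ∈ range n, x ^ q ^ i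

section

variable {F : Type*} [Field F] [Fintype F] {q n : ℕ}

theorem pos_of_card_eq_pow (hF : Fintype.card F = q ^ n) : 0 < n := by
  by_contra! h
  have := Fintype.one_lt_card (α := F)
  simp_all

theorem one_lt_of_card_eq_pow (hF : Fintype.card F = q ^ n) : 1 < q := by
  by_contra! h
  have := Fintype.one_lt_card (α := F)
  have hn := pos_of_card_eq_pow hF
  interval_cases q <;> simp_all [zero_pow hn.ne']

-- `q` divides `|F|`, a power of the characteristic, so `x ↦ x ^ q ^ i` is a power of the Frobenius.
theorem exists_ringHom_pow_pow (hF : Fintype.card F = q ^ n) (i : ℕ) :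
    ∃ φ : F →+* F, ∀ x, φ x = x ^ q ^ i := by
  obtain ⟨p, hchar⟩ := CharP.exists F
  have hp : p.Prime := CharP.char_is_prime F p
  have : Fact p.Prime := ⟨hp⟩
  obtain ⟨m, -, hm⟩ := FiniteField.card F p
  have hdvd : q ∣ p ^ (m : ℕ) := hm ▸ hF ▸ dvd_pow_self q (pos_of_card_eq_pow hF).ne'
  obtain ⟨k, -, rfl⟩ := (Nat.dvd_prime_pow hp).1 hdvd
  exact ⟨iterateFrobenius F p (k * i), fun x => by rw [iterateFrobenius_def, pow_mul]⟩

theorem pow_pow_card_eq_self (hF : Fintype.card F = q ^ n) (x : F) : x ^ q ^ n = x :=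
  hF ▸ FiniteField.pow_card x

theorem qTrace_sum (hF : Fintype.card F = q ^ n) {ι : Type*} (s : Finset ι) (g : ι → F) :
    qTrace q n (∑ j ∈ s, g j) = ∑ j ∈ s, qTrace q n (g j) := by
  unfold qTrace
  rw [Finset.sum_comm]
  refine sum_congr rfl fun i _ => ?_
  obtain ⟨φ, hφ⟩ := exists_ringHom_pow_pow hF i
  simp only [← hφ, map_sum]

theorem qTrace_sub (hF : Fintype.card F = q ^ n) (x y : F) :
    qTrace q n (x - y) = qTrace q n x - qTrace q n y := by
  unfold qTrace
  rw [← sum_sub_distrib]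
  refine sum_congr rfl fun i _ => ?_
  obtain ⟨φ, hφ⟩ := exists_ringHom_pow_pow hF i
  simp only [← hφ, map_sub]

theorem qTrace_pow (hF : Fintype.card F = q ^ n) (x : F) : qTrace q n (x ^ q) = qTrace q n x := by
  unfold qTrace
  have hshift := sum_range_succ' (fun i => x ^ q ^ i) n
  rw [sum_range_succ, pow_pow_card_eq_self hF, pow_zero, pow_one] at hshift
  simp only [← pow_mul, ← pow_succ']
  exact add_right_cancel hshift.symm

theorem qTrace_pow_pow (hF : Fintype.card F = q ^ n) (x : F) (k : ℕ) :
    qTrace q n (x ^ q ^ k) = qTrace q n x := by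
  induction k with
  | zero => rw [pow_zero, pow_one]
  | succ k ih => rw [pow_succ, pow_mul, qTrace_pow hF, ih]

theorem exists_qTrace_ne_zero (hF : Fintype.card F = q ^ n) : ∃ y : F, qTrace q n y ≠ 0 := by
  by_contra! htr
  have hq := one_lt_of_card_eq_pow hF
  have hn := pos_of_card_eq_pow hF
  set P : F[X] := ∑ i ∈ range n, X ^ q ^ i
  have hdeg : P.natDegree < Fintype.card (F) := by
    calc P.natDegree ≤ q ^ (n - 1) := natDegree_sum_le_of_forall_le _ _ fun i hi => by
            rw [natDegree_X_pow]
            exact Nat.pow_le_pow_right hq.le (by have := mem_range.1 hi; omega)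
      _ < q ^ n := Nat.pow_lt_pow_right hq (by omega)
      _ = Fintype.card F := hF.symm
  have hP : P = 0 := eq_zero_of_natDegree_lt_card_of_eval_eq_zero P Function.injective_id
    (fun y => by simpa [P, eval_finsetSum, qTrace] using htr y) hdeg
  have hcoeff : P.coeff 1 = 1 := by
    simp [P, coeff_X_pow, eq_comm (a := 1), hq.ne', hn]
  simp [hP] at hcoeff

theorem eq_zero_of_forall_qTrace_mul_eq_zero (hF : Fintype.card F = q ^ n) {c : F}
    (hc : ∀ x, qTrace q n (c * x) = 0) : c = 0 := by
  by_contra hc0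
  obtain ⟨y, hy⟩ := exists_qTrace_ne_zero hF
  exact hy (by simpa [mul_div_cancel₀ y hc0] using hc (y / c))

theorem qTrace_mul_linearized_eq (hF : Fintype.card F = q ^ n) (a : ℕ → F) (u x : F) :
    qTrace q n (u * ∑ i ∈ range n, a i * x ^ q ^ i)
      = qTrace q n ((∑ i ∈ range n, a i ^ q ^ (n - i) * u ^ q ^ (n - i)) * x) := by
  rw [mul_sum, sum_mul, qTrace_sum hF, qTrace_sum hF]
  refine sum_congr rfl fun i hi => ?_
  rw [← qTrace_pow_pow hF _ (n - i), mul_pow, mul_pow, ← pow_mul, ← pow_add,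
    Nat.add_sub_cancel' (mem_range.1 hi).le, pow_pow_card_eq_self hF]
  ring_nf

theorem orthogonal_graph_eq_graph_of_qTrace_adjoint (hF : Fintype.card F = q ^ n) {f g : F → F}
    (hfg : ∀ u x, qTrace q n (u * f x) = qTrace q n (g u * x)) :
    {w : F × F | ∀ s : F × F, (∃ x, s = (x, f x)) → qTrace q n (w.1 * s.2 - w.2 * s.1) = 0}
      = {w : F × F | ∃ x, w = (x, g x)} := by
  ext ⟨u, v⟩
  simp only [Set.mem_ofPred_eq]
  constructor
  · intro h
    have hgv : g u - v = 0 := eq_zero_of_forall_qTrace_mul_eq_zero hF fun x => by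
      rw [sub_mul, qTrace_sub hF, ← hfg, ← qTrace_sub hF]
      exact h (x, f x) ⟨x, rfl⟩
    exact ⟨u, by rw [sub_eq_zero.1 hgv]⟩
  · rintro ⟨x, hx⟩ _ ⟨y, rfl⟩
    obtain ⟨rfl, rfl⟩ := Prod.mk.inj hx
    rw [qTrace_sub hF, hfg, sub_self]

end

theorem stmt_11_general (n q : ℕ)
    (F : Type) [Field F] [Fintype F] (hF : Fintype.card F = q ^ n)
    (a : ℕ → F) (f fhat : F → F)
    (hf : ∀ x : F, f x = ∑ i ∈ Finset.range n, a i * x ^ q ^ i)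
    (hfhat : ∀ x : F, fhat x = ∑ i ∈ Finset.range n, (a i) ^ q ^ (n - i) * x ^ q ^ (n - i)) :
    {w : F × F | ∀ s : F × F, (∃ x : F, s = (x, f x)) →
        ∑ i ∈ Finset.range n, (w.1 * s.2 - w.2 * s.1) ^ q ^ i = 0}
      = {w : F × F | ∃ x : F, w = (x, fhat x)} := by
  refine orthogonal_graph_eq_graph_of_qTrace_adjoint hF fun u x => ?_
  rw [hf, hfhat]
  exact qTrace_mul_linearized_eq hF a u x

/-- the orthogonal complement of `U_f = {(x, f(x))}` in
`F_{q^n} × F_{q^n}` with respect to `η'((x,y),(u,v)) = Tr_{q^n/q}(xv - yu)` is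
`U_{f̂} = {(x, f̂(x))}`, where `f̂` is the adjoint of `f`. -/
theorem stmt_11 (p e n q : ℕ) (hp : p.Prime) (he : 0 < e) (hn : 0 < n) (hq : q = p ^ e)
    (F : Type) [Field F] [Fintype F] (hF : Fintype.card F = q ^ n)
    (a : ℕ → F) (f fhat : F → F)
    (hf : ∀ x : F, f x = ∑ i ∈ Finset.range n, a i * x ^ q ^ i)
    (hfhat : ∀ x : F, fhat x = ∑ i ∈ Finset.range n, (a i) ^ q ^ (n - i) * x ^ q ^ (n - i)) :
    {w : F × F | ∀ s : F × F, (∃ x : F, s = (x, f x)) →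
        ∑ i ∈ Finset.range n, (w.1 * s.2 - w.2 * s.1) ^ q ^ i = 0}
      = {w : F × F | ∃ x : F, w = (x, fhat x)} :=
  stmt_11_general n q F hF a f fhat hf hfhat
end

section
/- Let a_1, a_3 ∈ F_{q^4} with N(a_1) ≠ N(a_3), where N(x) = x^{1+q+q^2+q^3}. Then the F_q-linear map w : F_{q^4} → F_{q^4}, w(A) = −a_1·A − a_3^q·A^q, is bijective, and its inverse is given by w^{-1}(x) = (−x·a_1^{q+q^2+q^3} + x^q·a_1^{q^2+q^3}·a_3^{q} − x^{q^2}·a_1^{q^3}·a_3^{q+q^2} + x^{q^3}·a_3^{q+q^2+q^3}) / (N(a_1) − N(a_3)). -/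
/-!
Write `σ` for the Frobenius `x ↦ x^q`, so that `σ⁴ = id` on `𝔽_{q^4}` and `w A = -a₁A - σ(a₃)σ(A)`.
Applying `σ`, `σ²`, `σ³` to `w A` gives three more twisted copies of this equation, and the
combination of the four whose coefficients make up the numerator of `w⁻¹` telescopes to
`(N(a₁) - N(a₃))·A`, because `σ⁴A = A` and `σ⁴a₃ = a₃`. So the formula is a left inverse of `w`,
and on a finite set a left inverse is two-sided.
-/

section RingEndomorphism

variable {R : Type*} [CommRing R] (σ : R →+* R)

/-- For the `q`-Frobenius of `𝔽_{q^4}` this is the norm `N(a) = a^(1+q+q^2+q^3)`. -/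
def orbitProd4 (a : R) : R := a * σ a * σ (σ a) * σ (σ (σ a))

def twistedLinear (a₁ a₃ A : R) : R := -(a₁ * A) - σ a₃ * σ A

def twistedAdjugate (a₁ a₃ x : R) : R :=
  -(x * (σ a₁ * σ (σ a₁) * σ (σ (σ a₁)))) + σ x * (σ (σ a₁) * σ (σ (σ a₁))) * σ a₃
    - σ (σ x) * σ (σ (σ a₁)) * (σ a₃ * σ (σ a₃))
    + σ (σ (σ x)) * (σ a₃ * σ (σ a₃) * σ (σ (σ a₃)))

theorem twistedAdjugate_twistedLinear {a₁ a₃ A : R} (ha₃ : σ (σ (σ (σ a₃))) = a₃)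
    (hA : σ (σ (σ (σ A))) = A) :
    twistedAdjugate σ a₁ a₃ (twistedLinear σ a₁ a₃ A) = (orbitProd4 σ a₁ - orbitProd4 σ a₃) * A := by
  simp only [twistedAdjugate, twistedLinear, orbitProd4, map_sub, map_neg, map_mul, ha₃, hA]
  ring

end RingEndomorphism

theorem FiniteField.exists_ringHom_eq_pow {F : Type*} [Field F] [Fintype F] {p e q n : ℕ}
    (hp : p.Prime) (hq : q = p ^ e) (hF : Fintype.card F = q ^ n) :
    ∃ σ : F →+* F, ∀ x, σ x = x ^ q := by
  have : Fact p.Prime := ⟨hp⟩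
  have : CharP F p := charP_of_card_eq_prime_pow (f := e * n) (by rw [hF, hq, pow_mul])
  exact ⟨iterateFrobenius F p e, fun x => by rw [hq, iterateFrobenius_def]⟩

theorem stmt_16_general (p e q : ℕ) (hp : p.Prime) (hq : q = p ^ e)
    (F : Type) [Field F] [Fintype F] (hF : Fintype.card F = q ^ 4)
    (a1 a3 : F) (hN : a1 ^ (1 + q + q ^ 2 + q ^ 3) ≠ a3 ^ (1 + q + q ^ 2 + q ^ 3))
    (w winv : F → F)
    (hw : ∀ A : F, w A = -(a1 * A) - a3 ^ q * A ^ q)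
    (hwinv : ∀ x : F, winv x =
      (-(x * a1 ^ (q + q ^ 2 + q ^ 3)) + x ^ q * a1 ^ (q ^ 2 + q ^ 3) * a3 ^ q
          - x ^ q ^ 2 * a1 ^ q ^ 3 * a3 ^ (q + q ^ 2)
          + x ^ q ^ 3 * a3 ^ (q + q ^ 2 + q ^ 3))
        / (a1 ^ (1 + q + q ^ 2 + q ^ 3) - a3 ^ (1 + q + q ^ 2 + q ^ 3))) :
    Function.Bijective w ∧ (∀ x : F, w (winv x) = x) ∧ (∀ x : F, winv (w x) = x) := by
  obtain ⟨σ, hσ⟩ := FiniteField.exists_ringHom_eq_pow hp hq hF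
  have hσ4 : ∀ x : F, σ (σ (σ (σ x))) = x := fun x => calc
    σ (σ (σ (σ x))) = x ^ q ^ 4 := by simp only [hσ, ← pow_mul]; ring
    _ = x := hF ▸ FiniteField.pow_card x
  have hnorm : ∀ a : F, orbitProd4 σ a = a ^ (1 + q + q ^ 2 + q ^ 3) := fun a => by
    simp only [orbitProd4, hσ, ← pow_mul]; ring
  have hw' : ∀ A, w A = twistedLinear σ a1 a3 A := fun A => by rw [hw, twistedLinear, hσ, hσ]
  have hwinv' : ∀ x, winv x =
      twistedAdjugate σ a1 a3 x / (orbitProd4 σ a1 - orbitProd4 σ a3) := fun x => by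
    rw [hwinv, hnorm, hnorm]
    simp only [twistedAdjugate, hσ, ← pow_mul]
    ring
  have hleft : Function.LeftInverse winv w := fun A => by
    rw [hwinv', hw', twistedAdjugate_twistedLinear σ (hσ4 a3) (hσ4 A),
      hnorm, hnorm, mul_div_cancel_left₀ _ (sub_ne_zero.mpr hN)]
  have hbij : Function.Bijective w := Finite.injective_iff_bijective.mp hleft.injective
  exact ⟨hbij, hleft.rightInverse_of_surjective hbij.surjective, hleft⟩

/-- if `N(a_1) ≠ N(a_3)` in `F_{q^4}`, then the `F_q`-linear map
`w(A) = -a_1 A - a_3^q A^q` is bijective, with the explicitly given inverse. -/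
theorem stmt_16 (p e q : ℕ) (hp : p.Prime) (he : 0 < e) (hq : q = p ^ e)
    (F : Type) [Field F] [Fintype F] (hF : Fintype.card F = q ^ 4)
    (a1 a3 : F) (hN : a1 ^ (1 + q + q ^ 2 + q ^ 3) ≠ a3 ^ (1 + q + q ^ 2 + q ^ 3))
    (w winv : F → F)
    (hw : ∀ A : F, w A = -(a1 * A) - a3 ^ q * A ^ q)
    (hwinv : ∀ x : F, winv x =
      (-(x * a1 ^ (q + q ^ 2 + q ^ 3)) + x ^ q * a1 ^ (q ^ 2 + q ^ 3) * a3 ^ q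
          - x ^ q ^ 2 * a1 ^ q ^ 3 * a3 ^ (q + q ^ 2)
          + x ^ q ^ 3 * a3 ^ (q + q ^ 2 + q ^ 3))
        / (a1 ^ (1 + q + q ^ 2 + q ^ 3) - a3 ^ (1 + q + q ^ 2 + q ^ 3))) :
    Function.Bijective w ∧ (∀ x : F, w (winv x) = x) ∧ (∀ x : F, winv (w x) = x) :=
  stmt_16_general p e q hp hq F hF a1 a3 hN w winv hw hwinv
end

section
/- Let q ≥ 2 be a prime power and n ≥ 3. For all integers i, j, m, k with 1 ≤ i ≤ n−1, 1 ≤ j ≤ n−1, 1 ≤ m ≤ n−1 and 2 ≤ k ≤ n−1, the congruence q^i + q^{j+1} + q^{m+k} ≡ q^k + q + 1 (mod q^n − 1) holds if and only if either (i = 1, j = k−1 and m = n−k) or (i = k, j = n−1 and m = n−k+1). -/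
/-!
Since `q ^ n ≡ 1` modulo `N = q ^ n - 1`, the exponents `j + 1` and `m + k` may be reduced
modulo `n`. Both sides are then sums of three powers with exponents below `n`, whose difference
lies strictly between `-N` and `2N`; so the congruence is an equality, or the left side exceeds
the right by exactly `N`. The latter is impossible by size (for `q = 2` two exponents would have
to be `n - 1`, leaving `2 ^ k + 2` as a power of two). In the equality
`q ^ a + q ^ b + q ^ c = q ^ k + q + 1`, reducing modulo `q` forces exactly one of `b, c` to be
`0`; cancelling a factor `q` from what remains gives `q ^ a' + q ^ c' = q ^ k' + 1`, solved the
same way.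
-/

theorem pow_modEq_pow_mod {q : ℕ} (hq : 0 < q) (n e : ℕ) :
    q ^ e ≡ q ^ (e % n) [MOD q ^ n - 1] := by
  rw [← ZMod.natCast_eq_natCast_iff]
  push_cast
  refine pow_eq_pow_mod e ?_
  have h := ZMod.natCast_self (q ^ n - 1)
  rw [Nat.cast_sub (Nat.one_le_pow _ _ hq), sub_eq_zero] at h
  exact_mod_cast h

theorem Nat.ModEq.eq_or_eq_add_of_lt {a b N : ℕ} (h : a ≡ b [MOD N]) (h₁ : b < a + N)
    (h₂ : a < b + 2 * N) : a = b ∨ a = b + N := by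
  obtain ⟨t, ht⟩ := Nat.modEq_iff_dvd.mp h
  have ht' : t = 0 ∨ t = -1 := by
    have : t ≤ 0 := by nlinarith
    have : -1 ≤ t := by nlinarith
    omega
  rcases ht' with rfl | rfl <;> [left; right] <;> linarith

theorem pow_ne_pow_add {q k r : ℕ} (hq : 2 ≤ q) (hr₀ : 0 < r) (hr : r < q ^ k) (x : ℕ) :
    q ^ x ≠ q ^ k + r := by
  intro h
  rcases le_or_gt x k with hx | hx
  · have := Nat.pow_le_pow_right (by omega : 0 < q) hx; omega
  · have := Nat.pow_le_pow_right (by omega : 0 < q) hx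
    rw [pow_succ] at this; nlinarith

theorem pow_add_pow_eq_pow_add_one_iff {q a b k : ℕ} (hq : 2 ≤ q) (hk : 0 < k) :
    q ^ a + q ^ b = q ^ k + 1 ↔ a = 0 ∧ b = k ∨ a = k ∧ b = 0 := by
  refine ⟨fun h => ?_, by rintro (⟨rfl, rfl⟩ | ⟨rfl, rfl⟩) <;> simp [add_comm]⟩
  have hqk : q ≤ q ^ k := Nat.le_self_pow hk.ne' q
  rcases Nat.eq_zero_or_pos a with rfl | ha <;> rcases Nat.eq_zero_or_pos b with rfl | hb
  · simp at h; omega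
  · exact .inl ⟨rfl, Nat.pow_right_injective hq (show q ^ b = q ^ k by simp at h; omega)⟩
  · exact .inr ⟨Nat.pow_right_injective hq (show q ^ a = q ^ k by simp at h; omega), rfl⟩
  · have hdvd : q ∣ q ^ k + 1 := h ▸ dvd_add (dvd_pow_self q ha.ne') (dvd_pow_self q hb.ne')
    have := Nat.dvd_one.mp ((Nat.dvd_add_right (dvd_pow_self q hk.ne')).mp hdvd)
    omega

theorem pow_add_pow_eq_pow_add_self_iff {q a b k : ℕ} (hq : 2 ≤ q) (ha : 0 < a) (hk : 1 < k) :
    q ^ a + q ^ b = q ^ k + q ↔ a = 1 ∧ b = k ∨ a = k ∧ b = 1 := by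
  obtain ⟨a, rfl⟩ : ∃ a', a = a' + 1 := ⟨a - 1, by omega⟩
  obtain ⟨k, rfl⟩ : ∃ k', k = k' + 1 := ⟨k - 1, by omega⟩
  rcases Nat.eq_zero_or_pos b with rfl | hb
  · refine iff_of_false (fun h => ?_) (by omega)
    have hdvd : q ∣ q ^ (a + 1) + 1 := by
      rw [pow_zero] at h; rw [h]; exact dvd_add (dvd_pow_self q (by omega)) dvd_rfl
    have := Nat.dvd_one.mp ((Nat.dvd_add_right (dvd_pow_self q (by omega))).mp hdvd)
    omega
  obtain ⟨b, rfl⟩ : ∃ b', b = b' + 1 := ⟨b - 1, by omega⟩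
  have hcancel : q ^ (a + 1) + q ^ (b + 1) = q ^ (k + 1) + q ↔ q ^ a + q ^ b = q ^ k + 1 := by
    rw [show q ^ (k + 1) + q = (q ^ k + 1) * q by ring, pow_succ, pow_succ, ← add_mul]
    exact Nat.mul_left_inj (by omega)
  rw [hcancel, pow_add_pow_eq_pow_add_one_iff hq (by omega)]
  omega

theorem three_pows_eq_iff {q a b c k : ℕ} (hq : 2 ≤ q) (ha : 0 < a) (hk : 1 < k) :
    q ^ a + q ^ b + q ^ c = q ^ k + q + 1 ↔
      a = 1 ∧ b = k ∧ c = 0 ∨ a = 1 ∧ b = 0 ∧ c = k ∨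
      a = k ∧ b = 1 ∧ c = 0 ∨ a = k ∧ b = 0 ∧ c = 1 := by
  rcases Nat.eq_zero_or_pos b with rfl | hb
  · rw [pow_zero, add_right_comm, Nat.add_right_cancel_iff,
      pow_add_pow_eq_pow_add_self_iff hq ha hk]
    omega
  rcases Nat.eq_zero_or_pos c with rfl | hc
  · rw [pow_zero, Nat.add_right_cancel_iff, pow_add_pow_eq_pow_add_self_iff hq ha hk]
    omega
  refine iff_of_false (fun h => ?_) (by omega)
  have hdvd : q ∣ q ^ k + q + 1 := h ▸ dvd_add (dvd_add (dvd_pow_self q ha.ne')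
    (dvd_pow_self q hb.ne')) (dvd_pow_self q hc.ne')
  have := Nat.dvd_one.mp ((Nat.dvd_add_right (dvd_add (dvd_pow_self q (by omega)) dvd_rfl)).mp hdvd)
  omega

theorem three_pows_ne_pow_add_pow_add_self {q n k a b c : ℕ} (hq : 2 ≤ q) (hk : 2 ≤ k)
    (ha : a < n) (hb : b < n) (hc : c < n) :
    q ^ a + q ^ b + q ^ c ≠ q ^ n + q ^ k + q := by
  have hn := mul_pow_sub_one (by omega : n ≠ 0) q
  obtain rfl | hq3 : q = 2 ∨ 3 ≤ q := by omega
  · have hsplit : ∀ x < n, 2 ^ x = 2 ^ (n - 1) ∨ 2 * 2 ^ x ≤ 2 ^ (n - 1) := fun x hx => by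
      rcases (show x = n - 1 ∨ x + 1 ≤ n - 1 by omega) with rfl | hx'
      · exact .inl rfl
      · exact .inr (pow_succ' 2 x ▸ Nat.pow_le_pow_right (by omega) hx')
    have h4 : 4 ≤ 2 ^ k := by simpa using Nat.pow_le_pow_right two_pos hk
    have hnk := pow_ne_pow_add (k := k) le_rfl two_pos (by omega)
    have := hnk (n - 1); have := hnk a; have := hnk b; have := hnk c
    rcases hsplit a ha with h | h <;> rcases hsplit b hb with h | h <;>
      rcases hsplit c hc with h | h <;> omega
  · have hle : ∀ x < n, q ^ x ≤ q ^ (n - 1) := fun x hx =>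
      Nat.pow_le_pow_right (by omega) (by omega)
    have := Nat.mul_le_mul_right (q ^ (n - 1)) hq3
    have := hle a ha; have := hle b hb; have := hle c hc
    omega

theorem three_pows_modEq_iff_eq {q n k a b c : ℕ} (hq : 2 ≤ q) (hk : 2 ≤ k)
    (hkn : k < n) (ha : a < n) (hb : b < n) (hc : c < n) :
    q ^ a + q ^ b + q ^ c ≡ q ^ k + q + 1 [MOD q ^ n - 1] ↔
      q ^ a + q ^ b + q ^ c = q ^ k + q + 1 := by
  refine ⟨fun h => ?_, fun h => h ▸ rfl⟩
  have hle : ∀ x < n, q ^ x ≤ q ^ (n - 1) := fun x hx => Nat.pow_le_pow_right (by omega) (by omega)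
  have hn : 2 * q ^ (n - 1) ≤ q ^ n :=
    mul_pow_sub_one (by omega : n ≠ 0) q ▸ Nat.mul_le_mul_right _ hq
  have hpos : ∀ x, 1 ≤ q ^ x := fun x => Nat.one_le_pow _ _ (by omega)
  have := hle a ha; have := hle b hb; have := hle c hc; have := hle k hkn
  have := hpos a; have := hpos b; have := hpos c
  have := Nat.le_self_pow (by omega : n - 1 ≠ 0) q
  refine (h.eq_or_eq_add_of_lt (by omega) (by omega)).resolve_right fun h' => ?_
  exact three_pows_ne_pow_add_pow_add_self hq hk ha hb hc (by omega)

theorem stmt_18_general (q : ℕ) (hq2 : 2 ≤ q)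
    (n : ℕ) (i j m k : ℕ)
    (hi1 : 1 ≤ i) (hi2 : i ≤ n - 1) (hj1 : 1 ≤ j) (hj2 : j ≤ n - 1)
    (hm1 : 1 ≤ m) (hm2 : m ≤ n - 1) (hk1 : 2 ≤ k) (hk2 : k ≤ n - 1) :
    q ^ i + q ^ (j + 1) + q ^ (m + k) ≡ q ^ k + q + 1 [MOD q ^ n - 1] ↔
      ((i = 1 ∧ j = k - 1 ∧ m = n - k) ∨ (i = k ∧ j = n - 1 ∧ m = n - k + 1)) := by
  have hred : q ^ i + q ^ (j + 1) + q ^ (m + k) ≡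
      q ^ i + q ^ ((j + 1) % n) + q ^ ((m + k) % n) [MOD q ^ n - 1] :=
    ((Nat.ModEq.refl _).add (pow_modEq_pow_mod (by omega) n _)).add
      (pow_modEq_pow_mod (by omega) n _)
  have hmod : ∀ x < 2 * n, x < n ∧ x % n = x ∨ n ≤ x ∧ x % n = x - n := fun x hx => by
    rcases lt_or_ge x n with h | h
    · exact .inl ⟨h, Nat.mod_eq_of_lt h⟩
    · exact .inr ⟨h, by rw [Nat.mod_eq_sub_mod h, Nat.mod_eq_of_lt (by omega)]⟩
  have hb := hmod (j + 1) (by omega)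
  have hc := hmod (m + k) (by omega)
  refine (Iff.intro hred.symm.trans hred.trans).trans ?_
  rw [three_pows_modEq_iff_eq hq2 hk1 (by omega) (by omega)
    (Nat.mod_lt _ (by omega)) (Nat.mod_lt _ (by omega)), three_pows_eq_iff hq2 hi1 hk1]
  omega

/-- for a prime power `q ≥ 2`, `n ≥ 3`, `1 ≤ i, j, m ≤ n-1` and
`2 ≤ k ≤ n-1`, one has `q^i + q^{j+1} + q^{m+k} ≡ q^k + q + 1 (mod q^n - 1)` if and only
if `(i = 1, j = k-1, m = n-k)` or `(i = k, j = n-1, m = n-k+1)`. -/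
theorem stmt_18 (q : ℕ) (hq2 : 2 ≤ q) (hqpp : ∃ p s : ℕ, p.Prime ∧ 0 < s ∧ q = p ^ s)
    (n : ℕ) (hn : 3 ≤ n) (i j m k : ℕ)
    (hi1 : 1 ≤ i) (hi2 : i ≤ n - 1) (hj1 : 1 ≤ j) (hj2 : j ≤ n - 1)
    (hm1 : 1 ≤ m) (hm2 : m ≤ n - 1) (hk1 : 2 ≤ k) (hk2 : k ≤ n - 1) :
    q ^ i + q ^ (j + 1) + q ^ (m + k) ≡ q ^ k + q + 1 [MOD q ^ n - 1] ↔
      ((i = 1 ∧ j = k - 1 ∧ m = n - k) ∨ (i = k ∧ j = n - 1 ∧ m = n - k + 1)) :=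
  stmt_18_general q hq2 n i j m k hi1 hi2 hj1 hj2 hm1 hm2 hk1 hk2
end

section
/- Let f(x) = Σ_{i=0}^{n-1} a_i x^{q^i} be a q-polynomial over F_{q^n} and let f̂(x) = Σ_{i=0}^{n-1} a_i^{q^{n-i}} x^{q^{n-i}} be its adjoint. Then for every m ∈ F_{q^n}, the F_q-subspaces {x ∈ F_{q^n} : f(x) = mx} and {x ∈ F_{q^n} : f̂(x) = mx} have the same F_q-dimension; in particular D_f = D_{f̂}, i.e., the maps x ↦ f(x)/x and x ↦ f̂(x)/x on the nonzero elements of F_{q^n} have the same image, so L_f = L_{f̂} with all point weights equal. -/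
/-!
Both solution sets are `𝔽_p`-subspaces, namely the kernels of `f - m` and `f̂ - m`. Writing
`σ = (· ^ q)`, an automorphism of `F` with `σ ^ n = 1`, the trace `Tr = Tr_{F/𝔽_p}` is
`σ`-invariant, so `Tr(a · σⁱ x · y) = Tr(x · σⁿ⁻ⁱ(a y))`: `f̂` is the adjoint of `f`, and
`f̂ - m` that of `f - m`, for the nondegenerate trace form. The kernel of an adjoint map is the
orthogonal of the range of the map, hence has the same dimension as its kernel. Finally `m` lies
in `D_f` exactly when `f(x) = m x` has a nonzero solution, which depends only on the number of
solutions.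
-/

open Module LinearMap Finset

namespace LinearMap.BilinForm

variable {K V : Type*} [Field K] [AddCommGroup V] [Module K V]

theorem ker_eq_orthogonal_range_of_isAdjointPair {B : LinearMap.BilinForm K V}
    (hB : B.SeparatingRight) {g ĝ : V →ₗ[K] V} (h : IsAdjointPair B B g ĝ) :
    ker ĝ = B.orthogonal (range g) := by
  ext y
  simp only [mem_ker, mem_orthogonal_iff, mem_range, forall_exists_index, forall_apply_eq_imp_iff]
  exact ⟨fun hy x => by rw [h, hy, map_zero], fun hy => hB _ fun x => h x y ▸ hy x⟩

theorem finrank_ker_eq_of_isAdjointPair [FiniteDimensional K V] {B : LinearMap.BilinForm K V}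
    (hB : B.Nondegenerate) {g ĝ : V →ₗ[K] V} (h : IsAdjointPair B B g ĝ) :
    finrank K (ker ĝ) = finrank K (ker g) := by
  have := finrank_range_add_finrank_ker g
  rw [ker_eq_orthogonal_range_of_isAdjointPair hB.2 h, finrank_orthogonal hB]
  omega

end LinearMap.BilinForm

namespace Algebra

variable {K L : Type*} [Field K] [Field L] [Algebra K L]

theorem trace_mul_algEquiv_mul (τ : L ≃ₐ[K] L) (c x y : L) :
    trace K L (c * τ x * y) = trace K L (x * τ.symm (c * y)) := by
  rw [← trace_eq_of_algEquiv τ.symm]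
  simp only [map_mul, AlgEquiv.symm_apply_apply]
  ring_nf

theorem trace_sum_mul_pow_mul {n : ℕ} {σ : L ≃ₐ[K] L} (hσ : σ ^ n = 1) (a : ℕ → L)
    (x y : L) :
    trace K L ((∑ i ∈ range n, a i * (σ ^ i) x) * y)
      = trace K L (x * ∑ i ∈ range n, (σ ^ (n - i)) (a i) * (σ ^ (n - i)) y) := by
  simp only [sum_mul, mul_sum, map_sum]
  refine sum_congr rfl fun i hi => ?_
  have hinv : σ ^ (n - i) = (σ ^ i)⁻¹ := by
    rw [pow_sub σ (mem_range.mp hi).le, hσ, one_mul]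
  rw [trace_mul_algEquiv_mul, hinv, AlgEquiv.aut_inv]
  simp only [map_mul]

variable [FiniteDimensional K L] [Algebra.IsSeparable K L]

theorem finrank_ker_sub_mulLeft_eq_of_trace_adjoint {g ĝ : L →ₗ[K] L}
    (h : ∀ x y, trace K L (g x * y) = trace K L (x * ĝ y)) (m : L) :
    finrank K (ker (g - mulLeft K m)) = finrank K (ker (ĝ - mulLeft K m)) := by
  refine (BilinForm.finrank_ker_eq_of_isAdjointPair (traceForm_nondegenerate K L) ?_).symm
  refine IsAdjointPair.sub (B := traceForm K L) (B' := traceForm K L) h fun x y => ?_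
  simp only [mulLeft_apply, traceForm_apply, mul_assoc, mul_left_comm]

theorem card_eq_mul_eq_card_eq_mul_of_trace_adjoint {g ĝ : L →ₗ[K] L}
    (h : ∀ x y, trace K L (g x * y) = trace K L (x * ĝ y)) (m : L) :
    Nat.card {x : L // g x = m * x} = Nat.card {x : L // ĝ x = m * x} := by
  have hker (φ : L →ₗ[K] L) : {x : L // φ x = m * x} ≃ ker (φ - mulLeft K m) :=
    Equiv.subtypeEquivRight fun x => by simp [sub_eq_zero]
  obtain ⟨e⟩ := FiniteDimensional.nonempty_linearEquiv_of_finrank_eq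
    (finrank_ker_sub_mulLeft_eq_of_trace_adjoint h m)
  rw [Nat.card_congr (hker g), Nat.card_congr (hker ĝ), Nat.card_congr e.toEquiv]

end Algebra

namespace FiniteField

variable {K L : Type*} [Field K] [Fintype K] [Field L] [Algebra K L]

theorem frobeniusAlgEquivOfAlgebraic_pow_apply [Algebra.IsAlgebraic K L] (k : ℕ) (x : L) :
    (frobeniusAlgEquivOfAlgebraic K L ^ k) x = x ^ Fintype.card K ^ k := by
  rw [AlgEquiv.coe_pow, coe_frobeniusAlgEquivOfAlgebraic_iterate]

theorem frobeniusAlgEquivOfAlgebraic_pow_eq_one [Fintype L] {k : ℕ}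
    (hk : Fintype.card L = Fintype.card K ^ k) : frobeniusAlgEquivOfAlgebraic K L ^ k = 1 :=
  AlgEquiv.ext fun x => by rw [frobeniusAlgEquivOfAlgebraic_pow_apply, ← hk, pow_card]; rfl

end FiniteField

theorem exists_ne_zero_div_eq_iff_one_lt_card {G₀ : Type*} [GroupWithZero G₀] [Finite G₀]
    {g : G₀ → G₀} (hg : g 0 = 0) (m : G₀) :
    (∃ x, x ≠ 0 ∧ g x / x = m) ↔ 1 < Nat.card {x : G₀ // g x = m * x} := by
  rw [Finite.one_lt_card_iff_nontrivial, Subtype.nontrivial_iff_exists_ne _ ⟨0, by simp [hg]⟩]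
  exact exists_congr fun x => by
    rw [exists_prop, and_comm]
    exact and_congr_left (div_eq_iff ·)

theorem stmt_19_general (p e n q : ℕ) (hp : p.Prime) (hq : q = p ^ e)
    (F : Type) [Field F] [Fintype F] (hF : Fintype.card F = q ^ n)
    (a : ℕ → F) (f fhat : F → F)
    (hf : ∀ x : F, f x = ∑ i ∈ Finset.range n, a i * x ^ q ^ i)
    (hfhat : ∀ x : F, fhat x = ∑ i ∈ Finset.range n, (a i) ^ q ^ (n - i) * x ^ q ^ (n - i)) :
    (∀ m : F, Nat.card {x : F // f x = m * x} = Nat.card {x : F // fhat x = m * x}) ∧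
    {y : F | ∃ x : F, x ≠ 0 ∧ f x / x = y} = {y : F | ∃ x : F, x ≠ 0 ∧ fhat x / x = y} := by
  subst hq
  have : Fact p.Prime := ⟨hp⟩
  have : CharP F p := charP_of_card_eq_prime_pow (by rw [hF, ← pow_mul])
  let : Algebra (ZMod p) F := ZMod.algebra F p
  set σ := FiniteField.frobeniusAlgEquivOfAlgebraic (ZMod p) F ^ e
  have hσ (k : ℕ) (x : F) : (σ ^ k) x = x ^ (p ^ e) ^ k := by
    rw [← pow_mul, FiniteField.frobeniusAlgEquivOfAlgebraic_pow_apply, ZMod.card, pow_mul]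
  have hσn : σ ^ n = 1 := by
    rw [← pow_mul]
    exact FiniteField.frobeniusAlgEquivOfAlgebraic_pow_eq_one (by rw [hF, ZMod.card, pow_mul])
  let fₗ : F →ₗ[ZMod p] F := ∑ i ∈ range n, a i • (σ ^ i).toLinearMap
  let fhatₗ : F →ₗ[ZMod p] F := ∑ i ∈ range n, (σ ^ (n - i)) (a i) • (σ ^ (n - i)).toLinearMap
  have hfₗ (x : F) : fₗ x = f x := by
    simp only [fₗ, LinearMap.sum_apply, LinearMap.smul_apply, AlgEquiv.toLinearMap_apply,
      smul_eq_mul, hσ, hf]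
  have hfhatₗ (x : F) : fhatₗ x = fhat x := by
    simp only [fhatₗ, LinearMap.sum_apply, LinearMap.smul_apply, AlgEquiv.toLinearMap_apply,
      smul_eq_mul, hσ, hfhat]
  have hadj (x y : F) :
      Algebra.trace (ZMod p) F (fₗ x * y) = Algebra.trace (ZMod p) F (x * fhatₗ y) := by
    simpa only [hfₗ, hfhatₗ, hf, hfhat, hσ] using Algebra.trace_sum_mul_pow_mul hσn a x y
  have hcard (m : F) :
      Nat.card {x : F // f x = m * x} = Nat.card {x : F // fhat x = m * x} := by
    simpa only [hfₗ, hfhatₗ] using Algebra.card_eq_mul_eq_card_eq_mul_of_trace_adjoint hadj m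
  refine ⟨hcard, Set.ext fun m => ?_⟩
  simp only [Set.mem_ofPred_eq, exists_ne_zero_div_eq_iff_one_lt_card (hfₗ 0 ▸ map_zero fₗ),
    exists_ne_zero_div_eq_iff_one_lt_card (hfhatₗ 0 ▸ map_zero fhatₗ), hcard]

/-- a q-polynomial `f` and its adjoint `f̂` define the same linear set of
PG(1,q^n) with all point weights equal: for every `m` the solution spaces of `f(x) = mx`
and `f̂(x) = mx` have the same size (hence the same `F_q`-dimension), and the maps
`x ↦ f(x)/x` and `x ↦ f̂(x)/x` have the same image on nonzero elements. -/
theorem stmt_19 (p e n q : ℕ) (hp : p.Prime) (he : 0 < e) (hn : 0 < n) (hq : q = p ^ e)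
    (F : Type) [Field F] [Fintype F] (hF : Fintype.card F = q ^ n)
    (a : ℕ → F) (f fhat : F → F)
    (hf : ∀ x : F, f x = ∑ i ∈ Finset.range n, a i * x ^ q ^ i)
    (hfhat : ∀ x : F, fhat x = ∑ i ∈ Finset.range n, (a i) ^ q ^ (n - i) * x ^ q ^ (n - i)) :
    (∀ m : F, Nat.card {x : F // f x = m * x} = Nat.card {x : F // fhat x = m * x}) ∧
    {y : F | ∃ x : F, x ≠ 0 ∧ f x / x = y} = {y : F | ∃ x : F, x ≠ 0 ∧ fhat x / x = y} :=
  stmt_19_general p e n q hp hq F hF a f fhat hf hfhat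
end
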